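/- arXiv:1906.09129 — 10 statements merged into one kernel-verified Lean document; each statement's English description precedes it below -/
import Mathlib

section
/- Let (z_n) and (w_n) be sequences in a Banach space X and let (α_n) be a sequence in [0,1] such that limsup α_n < 1. Suppose that z_{n+1} = α_n w_n + (1 − α_n) z_n for all n ∈ ℕ, that limsup(‖w_{n+1} − w_n‖ − ‖z_{n+1} − z_n‖) ≤ 0, and that d := limsup ‖w_n − z_n‖ is finite (i.e. the sequence (‖w_n − z_n‖) is bounded). Then for every t ∈ ℕ, liminf_{n→∞} | ‖w_{n+t} − z_n‖ − (1 + α_n + α_{n+1} + ⋯ + α_{n+t−1}) d | = 0. -/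
/-!
Write `r n = ‖w n - z n‖` and `S n t = α n + ⋯ + α (n+t-1)`. Since `z (n+1) - z n = α n • (w n - z n)`,
the hypothesis on the increments says that eventually `‖w (n+1) - w n‖ ≤ α n d + ε`, hence
`‖w (n+t) - w n‖ ≤ S n t d + ε`, and adding `r n ≤ d + ε` bounds `‖w (n+t) - z n‖` from above
by `(1 + S n t) d + ε` eventually.

The matching lower bound holds frequently, by induction on `t`. The case `t = 0` is the definition
of `d` as a limsup. If `‖w (n+t+1) - z n‖ ≤ (1 + S n (t+1)) d - ε` held eventually, the convexity
estimate `‖x - z (n+1)‖ ≤ α n ‖x - w n‖ + (1 - α n) ‖x - z n‖` at `x = w (n+t+1)` and the upper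
bound for the `w`-increments would give `‖w (n+1+t) - z (n+1)‖ ≤ (1 + S (n+1) t) d - (1 - α n) ε + o(1)`
eventually. As `α n` stays eventually below some `a < 1`, this contradicts the induction hypothesis.
-/

open Filter Finset

theorem Filter.liminf_eq_zero_of_frequently_le {ι : Type*} {l : Filter ι} {f : ι → ℝ}
    (hf : ∀ i, 0 ≤ f i) (h : ∀ ε > 0, ∃ᶠ i in l, f i ≤ ε) : liminf f l = 0 := by
  refine le_antisymm (le_of_forall_pos_le_add fun ε hε => ?_) (le_liminf_of_le ?_ ?_)
  · simpa using liminf_le_of_frequently_le (h ε hε) (isBoundedUnder_of ⟨0, hf⟩)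
  · refine ⟨1, fun a ha => ?_⟩
    obtain ⟨i, hai, hi⟩ := ((h 1 one_pos).and_eventually ha).exists
    exact hi.trans hai
  · exact Eventually.of_forall hf

theorem eventually_norm_add_sub_le_sum {E : Type*} [SeminormedAddCommGroup E] {x : ℕ → E}
    {v : ℕ → ℝ} (hx : ∀ ε > 0, ∀ᶠ n in atTop, ‖x (n+1) - x n‖ ≤ v n + ε) (t : ℕ) :
    ∀ ε > 0, ∀ᶠ n in atTop, ‖x (n+t) - x n‖ ≤ ∑ i ∈ range t, v (n+i) + ε := by
  induction t with
  | zero => exact fun ε hε => Eventually.of_forall fun n => by simpa using hε.le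
  | succ t ih =>
    intro ε hε
    filter_upwards [ih (ε/2) (by positivity),
      (tendsto_add_atTop_nat t).eventually (hx (ε/2) (by positivity))] with n hsum hstep
    rw [sum_range_succ]
    calc ‖x (n+(t+1)) - x n‖ ≤ ‖x (n+t+1) - x (n+t)‖ + ‖x (n+t) - x n‖ :=
          norm_sub_le_norm_sub_add_norm_sub _ _ _
      _ ≤ _ := by linarith

namespace Suzuki

theorem eventually_norm_add_sub_le {E : Type*} [SeminormedAddCommGroup E] {z w : ℕ → E}
    {α : ℕ → ℝ} {d : ℝ}
    (hw : ∀ ε > 0, ∀ᶠ n in atTop, ‖w (n+1) - w n‖ ≤ α n * d + ε)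
    (hd : ∀ ε > 0, ∀ᶠ n in atTop, ‖w n - z n‖ ≤ d + ε) (t : ℕ) :
    ∀ ε > 0, ∀ᶠ n in atTop, ‖w (n+t) - z n‖ ≤ (1 + ∑ i ∈ range t, α (n+i)) * d + ε := by
  intro ε hε
  filter_upwards [eventually_norm_add_sub_le_sum hw t (ε/2) (by positivity),
    hd (ε/2) (by positivity)] with n hwt hr
  rw [← sum_mul] at hwt
  linarith [norm_sub_le_norm_sub_add_norm_sub (w (n+t)) (w n) (z n)]

variable {X : Type*} [NormedAddCommGroup X] [NormedSpace ℝ X] {z w : ℕ → X} {α : ℕ → ℝ} {d : ℝ}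

theorem norm_succ_sub_eq {n : ℕ} (hα : 0 ≤ α n) (hz : z (n+1) = α n • w n + (1 - α n) • z n) :
    ‖z (n+1) - z n‖ = α n * ‖w n - z n‖ := by
  rw [hz, show α n • w n + (1 - α n) • z n - z n = α n • (w n - z n) by module, norm_smul,
    Real.norm_of_nonneg hα]

theorem norm_sub_succ_le {n : ℕ} (hα : α n ∈ Set.Icc (0:ℝ) 1)
    (hz : z (n+1) = α n • w n + (1 - α n) • z n) (x : X) :
    ‖x - z (n+1)‖ ≤ α n * ‖x - w n‖ + (1 - α n) * ‖x - z n‖ := by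
  simpa only [hz, dist_eq_norm', smul_eq_mul] using
    (convexOn_univ_dist x).2 (Set.mem_univ (w n)) (Set.mem_univ (z n)) hα.1
      (sub_nonneg.2 hα.2) (by ring)

theorem eventually_norm_succ_sub_le (hα : ∀ n, α n ∈ Set.Icc (0:ℝ) 1)
    (hrec : ∀ n, z (n+1) = α n • w n + (1 - α n) • z n)
    (hdiff : ∀ ε > 0, ∀ᶠ n in atTop, ‖w (n+1) - w n‖ - ‖z (n+1) - z n‖ ≤ ε)
    (hd : ∀ ε > 0, ∀ᶠ n in atTop, ‖w n - z n‖ ≤ d + ε) :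
    ∀ ε > 0, ∀ᶠ n in atTop, ‖w (n+1) - w n‖ ≤ α n * d + ε := by
  intro ε hε
  filter_upwards [hdiff (ε/2) (by positivity), hd (ε/2) (by positivity)] with n hw hr
  rw [norm_succ_sub_eq (hα n).1 (hrec n)] at hw
  nlinarith [(hα n).1, (hα n).2]

theorem frequently_le_norm_add_sub (hα : ∀ n, α n ∈ Set.Icc (0:ℝ) 1)
    (hrec : ∀ n, z (n+1) = α n • w n + (1 - α n) • z n)
    (hw : ∀ ε > 0, ∀ᶠ n in atTop, ‖w (n+1) - w n‖ ≤ α n * d + ε)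
    (hd : ∀ ε > 0, ∃ᶠ n in atTop, d - ε < ‖w n - z n‖)
    {a : ℝ} (ha : a < 1) (hαa : ∀ᶠ n in atTop, α n ≤ a) (t : ℕ) :
    ∀ ε > 0, ∃ᶠ n in atTop, (1 + ∑ i ∈ range t, α (n+i)) * d - ε ≤ ‖w (n+t) - z n‖ := by
  induction t with
  | zero => exact fun ε hε => (hd ε hε).mono fun n hn => by simpa using hn.le
  | succ t ih =>
    intro ε hε
    by_contra hcon
    have hδ : 0 < (1 - a) * ε / 4 := by have := sub_pos.2 ha; positivity
    have hih := ih _ hδ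
    rw [← map_add_atTop_eq_nat 1, frequently_map] at hih
    refine hih ?_
    filter_upwards [not_frequently.1 hcon, hαa,
      eventually_norm_add_sub_le_sum hw (t+1) ((1 - a) * ε / 2) (by positivity)]
      with n hfar hαn hwt
    have hshift : ∑ i ∈ range (t+1), α (n+i) = α n + ∑ i ∈ range t, α (n+1+i) := by
      rw [sum_range_succ', add_comm]
      simp only [add_assoc, add_comm 1, add_zero]
    rw [← sum_mul, hshift] at hwt
    rw [hshift, not_le] at hfar
    rw [show n + (t+1) = n + 1 + t by ring] at hfar hwt
    obtain ⟨hα0, hα1⟩ := hα n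
    rw [not_le]
    calc ‖w (n+1+t) - z (n+1)‖
        ≤ α n * ‖w (n+1+t) - w n‖ + (1 - α n) * ‖w (n+1+t) - z n‖ :=
          norm_sub_succ_le (hα n) (hrec n) _
      _ ≤ α n * ((α n + ∑ i ∈ range t, α (n+1+i)) * d + (1 - a) * ε / 2)
            + (1 - α n) * ((1 + (α n + ∑ i ∈ range t, α (n+1+i))) * d - ε) := by
          gcongr
      _ < (1 + ∑ i ∈ range t, α (n+1+i)) * d - (1 - a) * ε / 4 := by nlinarith

end Suzuki

open Suzuki in
theorem suzuki_lemma_one_general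
    {X : Type*} [NormedAddCommGroup X] [NormedSpace ℝ X]
    (z w : ℕ → X) (α : ℕ → ℝ)
    (hα : ∀ n, α n ∈ Set.Icc (0:ℝ) 1)
    (hαlimsup : Filter.limsup α Filter.atTop < 1)
    (hrec : ∀ n, z (n+1) = α n • w n + (1 - α n) • z n)
    (hdiff : ∀ ε : ℝ, 0 < ε → ∃ N : ℕ, ∀ n ≥ N,
      ‖w (n+1) - w n‖ - ‖z (n+1) - z n‖ ≤ ε)
    (hbdd : ∃ C : ℝ, ∀ n, ‖w n - z n‖ ≤ C) :
    ∀ t : ℕ,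
      Filter.liminf
        (fun n => |‖w (n+t) - z n‖ -
          (1 + ∑ i ∈ Finset.range t, α (n+i)) *
            Filter.limsup (fun m => ‖w m - z m‖) Filter.atTop|)
        Filter.atTop = 0 := by
  intro t
  obtain ⟨C, hC⟩ := hbdd
  set d := limsup (fun m => ‖w m - z m‖) atTop
  have hd_upper : ∀ ε > 0, ∀ᶠ m in atTop, ‖w m - z m‖ ≤ d + ε := fun ε hε =>
    (eventually_lt_of_limsup_lt (by linarith) (isBoundedUnder_of ⟨C, hC⟩)).mono fun _ h => h.le
  have hd_lower : ∀ ε > 0, ∃ᶠ m in atTop, d - ε < ‖w m - z m‖ := fun ε hε =>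
    frequently_lt_of_lt_limsup (isBoundedUnder_of ⟨0, fun _ => norm_nonneg _⟩).isCoboundedUnder_le
      (by linarith)
  obtain ⟨a, hlimsup_a, ha⟩ := exists_between hαlimsup
  have hαa : ∀ᶠ n in atTop, α n ≤ a :=
    (eventually_lt_of_limsup_lt hlimsup_a (isBoundedUnder_of ⟨1, fun n => (hα n).2⟩)).mono
      fun _ h => h.le
  have hw := eventually_norm_succ_sub_le hα hrec
    (fun ε hε => eventually_atTop.2 (hdiff ε hε)) hd_upper
  refine liminf_eq_zero_of_frequently_le (fun _ => abs_nonneg _) fun ε hε => ?_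
  refine ((frequently_le_norm_add_sub hα hrec hw hd_lower ha hαa t ε hε).and_eventually
    (eventually_norm_add_sub_le hw hd_upper t ε hε)).mono fun n hn => ?_
  exact abs_le.2 ⟨by linarith [hn.1], by linarith [hn.2]⟩

/-- Suzuki's Lemma 2.1 (Lemma 3.2 in the paper): if `z_{n+1} = α_n w_n + (1-α_n) z_n`,
`limsup α_n < 1`, `limsup (‖w_{n+1}-w_n‖ - ‖z_{n+1}-z_n‖) ≤ 0` and
`d := limsup ‖w_n - z_n‖` is finite, then for every `t`,
`liminf |‖w_{n+t} - z_n‖ - (1 + α_n + ⋯ + α_{n+t-1}) d| = 0`. -/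
theorem suzuki_lemma_one
    {X : Type*} [NormedAddCommGroup X] [NormedSpace ℝ X] [CompleteSpace X]
    (z w : ℕ → X) (α : ℕ → ℝ)
    (hα : ∀ n, α n ∈ Set.Icc (0:ℝ) 1)
    (hαlimsup : Filter.limsup α Filter.atTop < 1)
    (hrec : ∀ n, z (n+1) = α n • w n + (1 - α n) • z n)
    (hdiff : ∀ ε : ℝ, 0 < ε → ∃ N : ℕ, ∀ n ≥ N,
      ‖w (n+1) - w n‖ - ‖z (n+1) - z n‖ ≤ ε)
    (hbdd : ∃ C : ℝ, ∀ n, ‖w n - z n‖ ≤ C) :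
    ∀ t : ℕ,
      Filter.liminf
        (fun n => |‖w (n+t) - z n‖ -
          (1 + ∑ i ∈ Finset.range t, α (n+i)) *
            Filter.limsup (fun m => ‖w m - z m‖) Filter.atTop|)
        Filter.atTop = 0 :=
  suzuki_lemma_one_general z w α hα hαlimsup hrec hdiff hbdd
end

section
/- Let (z_n) and (w_n) be bounded sequences in a Banach space X and let (α_n) be a sequence in [0,1] with 0 < liminf α_n ≤ limsup α_n < 1. Suppose that z_{n+1} = α_n w_n + (1 − α_n) z_n for all n ∈ ℕ and that limsup(‖w_{n+1} − w_n‖ − ‖z_{n+1} − z_n‖) ≤ 0. Then lim_{n→∞} ‖w_n − z_n‖ = 0. -/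
/-!
Write `d n = w n - z n`, so that `z (n + 1) - z n = α n • d n` and
`d (n + 1) = (1 - α n) • d n + (w (n + 1) - w n)`. If `T = limsup ‖d n‖` were positive, take a
late index `m` with `‖d m‖ ≈ T` and a norming functional `f` of `d m`. Running the second identity
backwards, the hypothesis on `‖w (n + 1) - w n‖` keeps `f (d n) ≥ T / 2` on a window of `k` steps
before `m` (the error grows by a factor `3 / s` per step, where `1 - α n ≥ s`). By the first
identity `f ∘ z` then increases by at least `a * T / 2` per step on that window (where `α n ≥ a`),
which for large `k` contradicts the boundedness of `z`.
-/

open Filter Set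

lemma mul_le_sub_of_le_sub_succ {g : ℕ → ℝ} {δ : ℝ} {k : ℕ}
    (hg : ∀ i < k, δ ≤ g (i + 1) - g i) : k * δ ≤ g k - g 0 := by
  induction k with
  | zero => simp
  | succ k ih =>
    have := hg k k.lt_succ_self
    have := ih fun i hi => hg i (hi.trans k.lt_succ_self)
    push_cast
    linarith

lemma le_mul_pow_of_mul_le_add {y β : ℕ → ℝ} {s ε : ℝ} {k : ℕ} (hs : 0 < s) (hs1 : s ≤ 1)
    (hε : 0 ≤ ε) (hβ : ∀ i < k, s ≤ β i) (hstep : ∀ i < k, β i * y i ≤ y (i + 1) + 2 * ε)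
    (hk : y k ≤ ε) {i : ℕ} (hi : i ≤ k) : y i ≤ ε * (3 / s) ^ (k - i) := by
  have h3s : 1 ≤ 3 / s := by rw [le_div_iff₀ hs]; linarith
  induction hi using Nat.decreasingInduction with
  | self => simpa using hk
  | of_succ i hik ih =>
    have hE : ε ≤ ε * (3 / s) ^ (k - (i + 1)) := le_mul_of_one_le_right hε (one_le_pow₀ h3s)
    have hpow : ε * (3 / s) ^ (k - i) = 3 * (ε * (3 / s) ^ (k - (i + 1))) / s := by
      rw [show k - i = k - (i + 1) + 1 by omega, pow_succ]; field_simp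
    rw [hpow, le_div_iff₀ hs]
    rcases le_or_gt (y i) 0 with hy | hy
    · nlinarith
    · nlinarith [hβ i hik, hstep i hik]

lemma exists_eventually_mem_Icc_of_liminf_pos {α : ℕ → ℝ} (hα : ∀ n, α n ∈ Icc (0 : ℝ) 1)
    (hinf : 0 < liminf α atTop) (hsup : limsup α atTop < 1) :
    ∃ a > 0, ∃ s > 0, s ≤ 1 ∧ ∀ᶠ n in atTop, α n ∈ Icc a (1 - s) := by
  have hbdd_ge : IsBoundedUnder (· ≥ ·) atTop α := isBoundedUnder_of ⟨0, fun n => (hα n).1⟩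
  have hbdd_le : IsBoundedUnder (· ≤ ·) atTop α := isBoundedUnder_of ⟨1, fun n => (hα n).2⟩
  have hle := liminf_le_limsup hbdd_le hbdd_ge
  refine ⟨liminf α atTop / 2, by positivity, (1 - limsup α atTop) / 2, by linarith,
    by linarith, ?_⟩
  filter_upwards [eventually_lt_of_lt_liminf (half_lt_self hinf) hbdd_ge,
    eventually_lt_of_limsup_lt (show limsup α atTop < 1 - (1 - limsup α atTop) / 2 by linarith)
      hbdd_le] with n h₁ h₂
  exact ⟨h₁.le, h₂.le⟩

section

variable {X : Type*} [NormedAddCommGroup X] [NormedSpace ℝ X]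

lemma StrongDual.apply_le_norm {f : StrongDual ℝ X} (hf : ‖f‖ ≤ 1) (x : X) : f x ≤ ‖x‖ :=
  (Real.le_norm_self _).trans ((f.le_of_opNorm_le hf x).trans_eq (one_mul _))

lemma mul_sub_dual_le_of_convex_step {z z' w w' : X} {a T ε : ℝ} {f : StrongDual ℝ X}
    (hf : ‖f‖ ≤ 1) (ha : a ∈ Icc (0 : ℝ) 1) (hε : 0 ≤ ε) (hz' : z' = a • w + (1 - a) • z)
    (hd : ‖w - z‖ ≤ T + ε) (hw : ‖w' - w‖ - ‖z' - z‖ ≤ ε) :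
    (1 - a) * (T - f (w - z)) ≤ T - f (w' - z') + 2 * ε := by
  have hdz : z' - z = a • (w - z) := by rw [hz']; module
  have hdd : w' - z' = (1 - a) • (w - z) + (w' - w) := by rw [hz']; module
  have hnz : ‖z' - z‖ = a * ‖w - z‖ := by rw [hdz, norm_smul, Real.norm_of_nonneg ha.1]
  have hfw := StrongDual.apply_le_norm hf (w' - w)
  rw [hdd, map_add, map_smul, smul_eq_mul]
  nlinarith [mul_le_mul_of_nonneg_left hd ha.1, mul_le_mul_of_nonneg_right ha.2 hε]

theorem mul_le_of_near_peak {z w : ℕ → X} {α : ℕ → ℝ} {a s T ε C : ℝ} {k : ℕ}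
    (hrec : ∀ n, z (n + 1) = α n • w n + (1 - α n) • z n) (hz : ∀ n, ‖z n‖ ≤ C)
    (ha : 0 ≤ a) (hs : 0 < s) (hs1 : s ≤ 1) (hε : 0 ≤ ε)
    (hα : ∀ i < k, α i ∈ Icc a (1 - s)) (hτ : ∀ i < k, ‖w i - z i‖ ≤ T + ε)
    (hdiff : ∀ i < k, ‖w (i + 1) - w i‖ - ‖z (i + 1) - z i‖ ≤ ε)
    (hpeak : T - ε ≤ ‖w k - z k‖) (hεk : ε * (3 / s) ^ k ≤ T / 2) :
    k * (a * (T / 2)) ≤ 2 * C := by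
  obtain ⟨f, hf, hfk⟩ := exists_dual_vector'' ℝ (w k - z k)
  set y : ℕ → ℝ := fun i => T - f (w i - z i)
  have hα01 (i : ℕ) (hi : i < k) : α i ∈ Icc (0 : ℝ) 1 :=
    ⟨ha.trans (hα i hi).1, by linarith [(hα i hi).2]⟩
  have hyk : y k ≤ ε := by simp only [y, hfk, RCLike.ofReal_real_eq_id, id]; linarith
  have hy (i : ℕ) (hi : i ≤ k) : y i ≤ T / 2 := by
    refine (le_mul_pow_of_mul_le_add hs hs1 hε (β := fun i => 1 - α i)
      (fun i hi => by linarith [(hα i hi).2])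
      (fun i hi => mul_sub_dual_le_of_convex_step hf (hα01 i hi) hε (hrec i) (hτ i hi) (hdiff i hi))
      hyk hi).trans (le_trans ?_ hεk)
    have h3s : 1 ≤ 3 / s := by rw [le_div_iff₀ hs]; linarith
    exact mul_le_mul_of_nonneg_left (pow_le_pow_right₀ h3s (k.sub_le i)) hε
  have hT : 0 ≤ T / 2 := (mul_nonneg hε (pow_nonneg (by positivity) k)).trans hεk
  have hinc (i : ℕ) (hi : i < k) : a * (T / 2) ≤ f (z (i + 1)) - f (z i) := by
    have hdz : z (i + 1) - z i = α i • (w i - z i) := by rw [hrec i]; module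
    rw [← map_sub, hdz, map_smul, smul_eq_mul]
    exact mul_le_mul (hα i hi).1 (by linarith [hy i hi.le]) hT (hα01 i hi).1
  have hzk := StrongDual.apply_le_norm hf (z k)
  have hz0 := StrongDual.apply_le_norm hf (-z 0)
  rw [map_neg, norm_neg] at hz0
  linarith [mul_le_sub_of_le_sub_succ (g := fun i => f (z i)) hinc, hz k, hz 0]

theorem limsup_norm_sub_nonpos {z w : ℕ → X} {α : ℕ → ℝ} {a s C : ℝ}
    (hrec : ∀ n, z (n + 1) = α n • w n + (1 - α n) • z n) (hz : ∀ n, ‖z n‖ ≤ C)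
    (hτ : IsBoundedUnder (· ≤ ·) atTop fun n => ‖w n - z n‖)
    (ha : 0 < a) (hs : 0 < s) (hs1 : s ≤ 1) (hα : ∀ᶠ n in atTop, α n ∈ Icc a (1 - s))
    (hdiff : ∀ ε : ℝ, 0 < ε → ∃ N : ℕ, ∀ n ≥ N, ‖w (n + 1) - w n‖ - ‖z (n + 1) - z n‖ ≤ ε) :
    limsup (fun n => ‖w n - z n‖) atTop ≤ 0 := by
  by_contra! hT
  set T := limsup (fun n => ‖w n - z n‖) atTop
  obtain ⟨k, hk⟩ := exists_nat_gt (2 * C / (a * (T / 2)))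
  set ε := T / 2 / (3 / s) ^ k
  have hε : 0 < ε := by positivity
  have hεk : ε * (3 / s) ^ k = T / 2 := div_mul_cancel₀ _ (by positivity)
  obtain ⟨N, hN⟩ := eventually_atTop.mp <| hα.and <|
    (eventually_lt_of_limsup_lt (lt_add_of_pos_right T hε) hτ).and <|
    eventually_atTop.mpr (hdiff ε hε)
  obtain ⟨m, hm, hpeak⟩ := (frequently_lt_of_lt_limsup
    (isBoundedUnder_of ⟨0, fun n => norm_nonneg _⟩).isCoboundedUnder_le
    (sub_lt_self T hε)).forall_exists_of_atTop (N + k)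
  obtain ⟨p, rfl⟩ : ∃ p, m = p + k := ⟨m - k, by omega⟩
  have := mul_le_of_near_peak (z := fun n => z (p + n)) (w := fun n => w (p + n))
    (α := fun n => α (p + n)) (fun n => hrec (p + n)) (fun n => hz _) ha.le hs hs1 hε.le
    (fun i _ => (hN (p + i) (by omega)).1) (fun i _ => (hN (p + i) (by omega)).2.1.le)
    (fun i _ => (hN (p + i) (by omega)).2.2) (by simpa [add_comm k] using hpeak.le) hεk.le
  rw [div_lt_iff₀ (by positivity)] at hk
  linarith

end

theorem suzuki_lemma_two_general
    {X : Type*} [NormedAddCommGroup X] [NormedSpace ℝ X]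
    (z w : ℕ → X) (α : ℕ → ℝ)
    (hzbdd : ∃ C : ℝ, ∀ n, ‖z n‖ ≤ C)
    (hwbdd : ∃ C : ℝ, ∀ n, ‖w n‖ ≤ C)
    (hα : ∀ n, α n ∈ Set.Icc (0:ℝ) 1)
    (hαliminf : 0 < Filter.liminf α Filter.atTop)
    (hαlimsup : Filter.limsup α Filter.atTop < 1)
    (hrec : ∀ n, z (n+1) = α n • w n + (1 - α n) • z n)
    (hdiff : ∀ ε : ℝ, 0 < ε → ∃ N : ℕ, ∀ n ≥ N,
      ‖w (n+1) - w n‖ - ‖z (n+1) - z n‖ ≤ ε) :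
    Filter.Tendsto (fun n => ‖w n - z n‖) Filter.atTop (nhds 0) := by
  obtain ⟨Cz, hCz⟩ := hzbdd
  obtain ⟨Cw, hCw⟩ := hwbdd
  obtain ⟨a, ha, s, hs, hs1, hαev⟩ := exists_eventually_mem_Icc_of_liminf_pos hα hαliminf hαlimsup
  have hτ0 (n : ℕ) : 0 ≤ ‖w n - z n‖ := norm_nonneg _
  have hτ : IsBoundedUnder (· ≤ ·) atTop fun n => ‖w n - z n‖ :=
    isBoundedUnder_of ⟨Cw + Cz, fun n => (norm_sub_le _ _).trans (add_le_add (hCw n) (hCz n))⟩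
  exact tendsto_of_le_liminf_of_limsup_le (le_liminf_of_le hτ.isCoboundedUnder_ge (.of_forall hτ0))
    (limsup_norm_sub_nonpos hrec hCz hτ ha hs hs1 hαev hdiff) hτ (isBoundedUnder_of ⟨0, hτ0⟩)

/-- Suzuki's Lemma 2.2: if `(z_n)`, `(w_n)` are bounded, `0 < liminf α_n ≤ limsup α_n < 1`,
`z_{n+1} = α_n w_n + (1-α_n) z_n` and `limsup (‖w_{n+1}-w_n‖ - ‖z_{n+1}-z_n‖) ≤ 0`,
then `‖w_n - z_n‖ → 0`. -/
theorem suzuki_lemma_two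
    {X : Type*} [NormedAddCommGroup X] [NormedSpace ℝ X] [CompleteSpace X]
    (z w : ℕ → X) (α : ℕ → ℝ)
    (hzbdd : ∃ C : ℝ, ∀ n, ‖z n‖ ≤ C)
    (hwbdd : ∃ C : ℝ, ∀ n, ‖w n‖ ≤ C)
    (hα : ∀ n, α n ∈ Set.Icc (0:ℝ) 1)
    (hαliminf : 0 < Filter.liminf α Filter.atTop)
    (hαlimsup : Filter.limsup α Filter.atTop < 1)
    (hrec : ∀ n, z (n+1) = α n • w n + (1 - α n) • z n)
    (hdiff : ∀ ε : ℝ, 0 < ε → ∃ N : ℕ, ∀ n ≥ N,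
      ‖w (n+1) - w n‖ - ‖z (n+1) - z n‖ ≤ ε) :
    Filter.Tendsto (fun n => ‖w n - z n‖) Filter.atTop (nhds 0) :=
  suzuki_lemma_two_general z w α hzbdd hwbdd hα hαliminf hαlimsup hrec hdiff
end

section
/- Let (a_n) be a sequence of nonnegative real numbers such that for all n ∈ ℕ, a_{n+1} ≤ (1 − s_n) a_n + s_n t_n + δ_n, where (s_n) ⊂ [0,1] and (t_n), (δ_n) are real sequences such that ∑_{n=0}^∞ s_n = ∞, limsup t_n ≤ 0 and ∑_{n=0}^∞ δ_n < ∞ (with δ_n ≥ 0). Then (a_n) converges to zero. -/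
/-!
Shifting the recursion by the eventual bound `c` on `t n` gives
`a (n+1) - c ≤ (1 - s n) (a n - c) + δ n`, and `1 - x ≤ exp (-x)` unrolls this to
`a m ≤ exp (-∑_{N ≤ i < m} s i) * a N + c + ∑_{N ≤ i < m} δ i`.
Choosing `N` so that `t n ≤ ε` and the tail of `∑ δ` is below `ε` beyond `N`, the divergence
of `∑ s` kills the first term, leaving `a m < 3ε` for large `m`.
-/

open Filter Finset Topology

section XuLemma

variable {a s δ : ℕ → ℝ}

lemma le_exp_neg_sum_mul_add_of_rec {c : ℝ} (hc : 0 ≤ c) {N : ℕ} (hs : ∀ n, s n ∈ Set.Icc (0 : ℝ) 1)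
    (hδ0 : ∀ n, 0 ≤ δ n) (haN : 0 ≤ a N)
    (hrec : ∀ n ≥ N, a (n + 1) ≤ (1 - s n) * a n + s n * c + δ n) {m : ℕ} (hm : N ≤ m) :
    a m ≤ Real.exp (-∑ i ∈ Ico N m, s i) * a N + c + ∑ i ∈ Ico N m, δ i := by
  induction m, hm using Nat.le_induction with
  | base => simpa using hc
  | succ m hm ih =>
    obtain ⟨hs0, hs1⟩ := hs m
    set E := Real.exp (-∑ i ∈ Ico N m, s i)
    set D := ∑ i ∈ Ico N m, δ i
    have hD : 0 ≤ D := sum_nonneg fun i _ => hδ0 i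
    have hE : (1 - s m) * E ≤ Real.exp (-∑ i ∈ Ico N (m + 1), s i) := by
      rw [sum_Ico_succ_top hm, neg_add, Real.exp_add, mul_comm]
      gcongr
      linarith [Real.add_one_le_exp (-s m)]
    calc a (m + 1) ≤ (1 - s m) * a m + s m * c + δ m := hrec m hm
      _ ≤ (1 - s m) * (E * a N + c + D) + s m * c + δ m := by gcongr
      _ ≤ Real.exp (-∑ i ∈ Ico N (m + 1), s i) * a N + c + (D + δ m) := by
        nlinarith [mul_le_mul_of_nonneg_right hE haN, mul_nonneg hs0 hD]
      _ = _ := by rw [sum_Ico_succ_top hm δ]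

lemma sum_Ico_le_tsum_nat_add (hδ0 : ∀ n, 0 ≤ δ n) (hδ : Summable δ) (N m : ℕ) :
    ∑ i ∈ Ico N m, δ i ≤ ∑' i, δ (i + N) := by
  rw [sum_Ico_eq_sum_range]
  simp_rw [add_comm N]
  exact ((summable_nat_add_iff N).mpr hδ).sum_le_tsum _ fun i _ => hδ0 _

lemma tendsto_exp_neg_sum_Ico (hssum : Tendsto (fun n => ∑ i ∈ range n, s i) atTop atTop)
    (N : ℕ) : Tendsto (fun m => Real.exp (-∑ i ∈ Ico N m, s i)) atTop (𝓝 0) := by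
  have : Tendsto (fun m => ∑ i ∈ Ico N m, s i) atTop atTop := by
    refine (tendsto_atTop_add_const_right _ (-∑ i ∈ range N, s i) hssum).congr' ?_
    filter_upwards [eventually_ge_atTop N] with m hm
    rw [sum_Ico_eq_sub _ hm, sub_eq_add_neg]
  exact Real.tendsto_exp_neg_atTop_nhds_zero.comp this

end XuLemma

/-- Xu's Lemma 2.5: if `a_{n+1} ≤ (1 - s_n) a_n + s_n t_n + δ_n` with `(s_n) ⊂ [0,1]`,
`∑ s_n = ∞`, `limsup t_n ≤ 0` (in the sense: for every `ε > 0`, eventually `t_n ≤ ε`)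
and `∑ δ_n < ∞` with `δ_n ≥ 0`, then `a_n → 0`. -/
theorem xu_lemma
    (a s t δ : ℕ → ℝ)
    (ha : ∀ n, 0 ≤ a n)
    (hs : ∀ n, s n ∈ Set.Icc (0:ℝ) 1)
    (hrec : ∀ n, a (n+1) ≤ (1 - s n) * a n + s n * t n + δ n)
    (hssum : Filter.Tendsto (fun n => ∑ i ∈ Finset.range n, s i) Filter.atTop Filter.atTop)
    (ht : ∀ ε : ℝ, 0 < ε → ∃ N : ℕ, ∀ n ≥ N, t n ≤ ε)
    (hδ0 : ∀ n, 0 ≤ δ n)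
    (hδ : Summable δ) :
    Filter.Tendsto a Filter.atTop (nhds 0) := by
  refine tendsto_order.2 ⟨fun e he => .of_forall fun n => he.trans_le (ha n), fun ε hε => ?_⟩
  obtain ⟨N₁, hN₁⟩ := ht (ε / 3) (by positivity)
  obtain ⟨N₂, hN₂⟩ :=
    ((tendsto_order.1 (tendsto_sum_nat_add δ)).2 (ε / 3) (by positivity)).exists_forall_of_atTop
  set N := max N₁ N₂
  have hrecN : ∀ n ≥ N, a (n + 1) ≤ (1 - s n) * a n + s n * (ε / 3) + δ n := fun n hn =>
    (hrec n).trans (by gcongr; exacts [(hs n).1, hN₁ n (le_of_max_le_left hn)])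
  have hexp := (tendsto_order.1 ((tendsto_exp_neg_sum_Ico hssum N).mul_const (a N))).2
    (ε / 3) (by simp; positivity)
  filter_upwards [hexp, eventually_ge_atTop N] with m hm hNm
  have htail := (sum_Ico_le_tsum_nat_add hδ0 hδ N m).trans_lt (hN₂ N (le_max_right _ _))
  calc a m ≤ Real.exp (-∑ i ∈ Ico N m, s i) * a N + ε / 3 + ∑ i ∈ Ico N m, δ i :=
        le_exp_neg_sum_mul_add_of_rec (by positivity) hs hδ0 (ha N) hrecN hNm
    _ < ε / 3 + ε / 3 + ε / 3 := by gcongr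
    _ = ε := by ring
end

section
/- Let H be a real Hilbert space, J : H → H a nonexpansive map, s a fixed point of J, u ∈ H, and N ∈ ℕ \ {0} with N ≥ 2‖u − s‖. Then for every k ∈ ℕ and every monotone function f : ℕ → ℕ, there are n ≤ f^{(r)}(0) and p ∈ B_N such that ‖J(p) − p‖ ≤ 1/(f(n)+1) and, for all q ∈ B_N, if ‖J(q) − q‖ ≤ 1/(n+1) then ‖p − u‖² ≤ ‖q − u‖² + 1/(k+1), where r := N²(k+1). -/
/-!
Let `S i` be the set of points of `B_N` that are `1/(f^{(i)}(0)+1)`-approximate fixed points,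
and `a i` the infimum of `‖· - u‖²` over it. Since `s ∈ S i` for all `i`, we have
`0 ≤ a 0` and `a r ≤ ‖s - u‖² ≤ N²/4` with `r = N²(k+1)`, so by telescoping one of the first
`r` increments of `a` is smaller than `1/(k+1)`. If it is the one from `i` to `i+1`, a
near-minimizer `p` of `S (i+1)` does the job with `n = f^{(i)}(0)`.
-/

open Finset in
theorem exists_succ_lt_add_of_sub_lt_mul (a : ℕ → ℝ) {ε : ℝ} {r : ℕ} (h : a r - a 0 < r * ε) :
    ∃ i < r, a (i + 1) < a i + ε := by
  have hsum : ∑ i ∈ range r, (a (i + 1) - a i) < ∑ _i ∈ range r, ε := by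
    rwa [sum_range_sub, sum_const, card_range, nsmul_eq_mul]
  obtain ⟨i, hi, hlt⟩ := exists_lt_of_sum_lt hsum
  exact ⟨i, mem_range.mp hi, by linarith⟩

theorem exists_near_minimizer_of_forall_mem {X : Type*} (F : X → ℝ) (hF : ∀ x, 0 ≤ F x)
    {S : ℕ → Set X} {s : X} (hs : ∀ i, s ∈ S i) {ε : ℝ} {r : ℕ} (hr : F s < r * ε) :
    ∃ i < r, ∃ p ∈ S (i + 1), ∀ q ∈ S i, F p < F q + ε := by
  set a : ℕ → ℝ := fun i => sInf (F '' S i)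
  have hbdd : ∀ i, BddBelow (F '' S i) := fun i => ⟨0, by rintro _ ⟨x, -, rfl⟩; exact hF x⟩
  have hne : ∀ i, (F '' S i).Nonempty := fun i => ⟨F s, s, hs i, rfl⟩
  have ha0 : 0 ≤ a 0 := le_csInf (hne 0) (by rintro _ ⟨x, -, rfl⟩; exact hF x)
  have har : a r ≤ F s := csInf_le (hbdd r) ⟨s, hs r, rfl⟩
  obtain ⟨i, hir, hgap⟩ := exists_succ_lt_add_of_sub_lt_mul a (r := r) (ε := ε) (by linarith)
  obtain ⟨_, ⟨p, hp, rfl⟩, hpa⟩ := exists_lt_of_csInf_lt (hne (i + 1)) hgap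
  refine ⟨i, hir, p, hp, fun q hq => ?_⟩
  have haq : a i ≤ F q := csInf_le (hbdd i) ⟨q, hq, rfl⟩
  linarith

theorem quantitative_projection_general
    {H : Type*} [NormedAddCommGroup H]
    (J : H → H)
    (s : H) (hs : J s = s) (u : H)
    (N : ℕ) (hN0 : N ≠ 0) (hNu : 2 * ‖u - s‖ ≤ (N : ℝ))
    (k : ℕ) (f : ℕ → ℕ) (hf : Monotone f) :
    ∃ n ≤ f^[N^2 * (k+1)] 0, ∃ p : H, ‖p - s‖ ≤ (N : ℝ) ∧
      ‖J p - p‖ ≤ 1 / ((f n : ℝ) + 1) ∧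
      ∀ q : H, ‖q - s‖ ≤ (N : ℝ) → ‖J q - q‖ ≤ 1 / ((n : ℝ) + 1) →
        ‖p - u‖^2 ≤ ‖q - u‖^2 + 1 / ((k : ℝ) + 1) := by
  have hiter : Monotone fun i => f^[i] 0 := hf.monotone_iterate_of_le_map (Nat.zero_le _)
  set S : ℕ → Set H := fun i =>
    {q | ‖q - s‖ ≤ N ∧ ‖J q - q‖ ≤ 1 / ((f^[i] 0 : ℕ) + 1 : ℝ)}
  have hsS : ∀ i, s ∈ S i := fun i => ⟨by simp, by simp only [hs, sub_self, norm_zero]; positivity⟩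
  have hsu : ‖s - u‖ ^ 2 < ((N ^ 2 * (k + 1) : ℕ) : ℝ) * (1 / ((k : ℝ) + 1)) := by
    have hN : (1 : ℝ) ≤ N := by exact_mod_cast Nat.one_le_iff_ne_zero.mpr hN0
    rw [norm_sub_rev]
    push_cast
    field_simp
    nlinarith [norm_nonneg (u - s)]
  obtain ⟨i, hir, p, ⟨hp, hJp⟩, hmin⟩ :=
    exists_near_minimizer_of_forall_mem (fun q => ‖q - u‖ ^ 2) (fun _ => by positivity) hsS hsu
  refine ⟨f^[i] 0, hiter hir.le, p, hp, ?_, fun q hq hJq => (hmin q ⟨hq, hJq⟩).le⟩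
  rwa [Function.iterate_succ_apply'] at hJp

/-- Quantitative projection argument (Proposition 3.1): for a nonexpansive `J` with fixed
point `s`, `u ∈ H` and `N ≥ 2‖u - s‖`, for every `k` and monotone `f` there are
`n ≤ f^{(r)}(0)` (with `r := N²(k+1)`) and `p` in the ball `B_N` around `s` such that
`‖J p - p‖ ≤ 1/(f n + 1)` and every `q ∈ B_N` with `‖J q - q‖ ≤ 1/(n+1)` satisfies
`‖p - u‖² ≤ ‖q - u‖² + 1/(k+1)`. -/
theorem quantitative_projection
    {H : Type*} [NormedAddCommGroup H] [InnerProductSpace ℝ H] [CompleteSpace H]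
    (J : H → H) (hJ : ∀ x y : H, ‖J x - J y‖ ≤ ‖x - y‖)
    (s : H) (hs : J s = s) (u : H)
    (N : ℕ) (hN0 : N ≠ 0) (hNu : 2 * ‖u - s‖ ≤ (N : ℝ))
    (k : ℕ) (f : ℕ → ℕ) (hf : Monotone f) :
    ∃ n ≤ f^[N^2 * (k+1)] 0, ∃ p : H, ‖p - s‖ ≤ (N : ℝ) ∧
      ‖J p - p‖ ≤ 1 / ((f n : ℝ) + 1) ∧
      ∀ q : H, ‖q - s‖ ≤ (N : ℝ) → ‖J q - q‖ ≤ 1 / ((n : ℝ) + 1) →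
        ‖p - u‖^2 ≤ ‖q - u‖^2 + 1 / ((k : ℝ) + 1) :=
  quantitative_projection_general J s hs u N hN0 hNu k f hf
end

section
/- Let H be a real Hilbert space and T : H → 2^H a maximal monotone operator. Let (c_n) ⊂ ℝ⁺ and c ∈ ℕ \ {0} satisfy c_n ≥ 1/c for all n, and let 𝒞 : ℕ → ℕ be a monotone function with c_n ≤ 𝒞(n) for all n ∈ ℕ. Write J := J_{1/c} and J_{n'} := J_{c_{n'}} for the resolvents of T. Define ζ(k,n) := 𝒞(n)·c·(k+1) − 1. Then for all k, n ∈ ℕ and all p ∈ H: if ‖J(p) − p‖ ≤ 1/(ζ(k,n)+1), then ‖J_{n'}(p) − p‖ ≤ 1/(k+1) for all n' ≤ n. -/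
/-!
For `0 < μ ≤ λ`, put `a = p - J_μ p` and `b = p - J_λ p`. Since `a/μ ∈ T(J_μ p)` and
`b/λ ∈ T(J_λ p)`, monotonicity and Cauchy–Schwarz give
`(‖a‖ - ‖b‖)(λ‖a‖ - μ‖b‖) ≤ 0`, hence `μ‖b‖ ≤ λ‖a‖`: the displacement of `p` under `J_λ` is
at most `λ/μ` times that under `J_μ`. With `μ = 1/c` and `λ = c_{n'} ≤ 𝒞(n)` the factor is at
most `𝒞(n)·c`, which is exactly what `ζ(k,n) + 1` absorbs.
-/

open scoped Pointwise RealInnerProductSpace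

/-- A set-valued operator `T : H → Set H` is monotone. -/
def IsMonotoneOp {H : Type*} [NormedAddCommGroup H] [InnerProductSpace ℝ H]
    (T : H → Set H) : Prop :=
  ∀ x x' y y' : H, y ∈ T x → y' ∈ T x' → 0 ≤ ⟪x - x', y - y'⟫

/-- `T` is maximal monotone. -/
def IsMaximalMonotoneOp {H : Type*} [NormedAddCommGroup H] [InnerProductSpace ℝ H]
    (T : H → Set H) : Prop :=
  IsMonotoneOp T ∧ ∀ T' : H → Set H, IsMonotoneOp T' → (∀ x, T x ⊆ T' x) → T' = T

/-- `J` is the family of resolvents of `T`: `J c = (I + c T)⁻¹` for `c > 0`. -/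
def IsResolventFamilyOf {H : Type*} [NormedAddCommGroup H] [InnerProductSpace ℝ H]
    (J : ℝ → H → H) (T : H → Set H) : Prop :=
  ∀ c : ℝ, 0 < c → ∀ x : H, x - J c x ∈ c • T (J c x)

lemma le_mul_of_sq_add_sq_le {x y μ lam : ℝ} (hx : 0 ≤ x) (hμ : 0 < μ)
    (hμlam : μ ≤ lam) (h : lam * x ^ 2 + μ * y ^ 2 ≤ (lam + μ) * (x * y)) :
    μ * y ≤ lam * x := by
  have hfactor : (x - y) * (lam * x - μ * y) ≤ 0 := by linarith
  rcases le_or_gt y x with hyx | hxy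
  · calc μ * y ≤ μ * x := by gcongr
      _ ≤ lam * x := by gcongr
  · nlinarith

namespace IsResolventFamilyOf

variable {H : Type*} [NormedAddCommGroup H] [InnerProductSpace ℝ H]
  {J : ℝ → H → H} {T : H → Set H}

lemma inv_smul_sub_mem (hJ : IsResolventFamilyOf J T) {μ : ℝ} (hμ : 0 < μ) (p : H) :
    μ⁻¹ • (p - J μ p) ∈ T (J μ p) := by
  obtain ⟨y, hy, hyp⟩ := hJ μ hμ p
  rw [← hyp, inv_smul_smul₀ hμ.ne']
  exact hy

lemma mul_norm_sub_le (hJ : IsResolventFamilyOf J T) (hT : IsMonotoneOp T) {μ lam : ℝ}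
    (hμ : 0 < μ) (hμlam : μ ≤ lam) (p : H) :
    μ * ‖J lam p - p‖ ≤ lam * ‖J μ p - p‖ := by
  have hlam : 0 < lam := hμ.trans_le hμlam
  set a := p - J μ p
  set b := p - J lam p
  have hmono : 0 ≤ ⟪b - a, μ⁻¹ • a - lam⁻¹ • b⟫ := by
    have := hT _ _ _ _ (hJ.inv_smul_sub_mem hμ p) (hJ.inv_smul_sub_mem hlam p)
    rwa [← sub_sub_sub_cancel_left (J lam p) (J μ p) p] at this
  have hexpand : μ * lam * ⟪b - a, μ⁻¹ • a - lam⁻¹ • b⟫ =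
      (lam + μ) * ⟪a, b⟫ - lam * ‖a‖ ^ 2 - μ * ‖b‖ ^ 2 := by
    simp only [inner_sub_left, inner_sub_right, real_inner_smul_right,
      real_inner_self_eq_norm_sq, real_inner_comm a b]
    field_simp
    ring
  have hquad : lam * ‖a‖ ^ 2 + μ * ‖b‖ ^ 2 ≤ (lam + μ) * (‖a‖ * ‖b‖) := by
    nlinarith [hexpand, mul_nonneg (mul_pos hμ hlam).le hmono, real_inner_le_norm a b]
  rw [norm_sub_rev, norm_sub_rev (J μ p)]
  exact le_mul_of_sq_add_sq_le (norm_nonneg a) hμ hμlam hquad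

end IsResolventFamilyOf

theorem resolvent_almost_fixed_points_general
    {H : Type*} [NormedAddCommGroup H] [InnerProductSpace ℝ H]
    (T : H → Set H) (hT : IsMaximalMonotoneOp T)
    (J : ℝ → H → H) (hJ : IsResolventFamilyOf J T)
    (cs : ℕ → ℝ)
    (c : ℕ) (hc : 0 < c) (hcsc : ∀ n, 1 / (c : ℝ) ≤ cs n)
    (C : ℕ → ℕ) (hC : Monotone C) (hcsC : ∀ n, cs n ≤ (C n : ℝ)) :
    ∀ k n : ℕ, ∀ p : H,
      ‖J (1 / (c : ℝ)) p - p‖ ≤ 1 / (((C n * c * (k+1) - 1 : ℕ) : ℝ) + 1) →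
      ∀ n' ≤ n, ‖J (cs n') p - p‖ ≤ 1 / ((k : ℝ) + 1) := by
  intro k n p hp n' hn'
  have hcR : (0 : ℝ) < c := by exact_mod_cast hc
  have hcsCn : cs n' ≤ C n := (hcsC n').trans (by exact_mod_cast hC hn')
  have hCn : (0 : ℝ) < C n := (one_div_pos.mpr hcR).trans_le ((hcsc n').trans hcsCn)
  have hζ : (((C n * c * (k+1) - 1 : ℕ) : ℝ) + 1) = C n * c * (k + 1) := by
    have : 0 < C n := by exact_mod_cast hCn
    rw [Nat.cast_pred (by positivity)]
    push_cast
    ring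
  have hdisp := hJ.mul_norm_sub_le hT.1 (one_div_pos.mpr hcR) (hcsc n') p
  calc ‖J (cs n') p - p‖ = c * (1 / c * ‖J (cs n') p - p‖) := by field_simp
    _ ≤ c * (C n * (1 / (C n * c * (k + 1)))) := by
      rw [← hζ]
      exact mul_le_mul_of_nonneg_left (hdisp.trans (mul_le_mul hcsCn hp (norm_nonneg _) hCn.le))
        hcR.le
    _ = 1 / ((k : ℝ) + 1) := by field_simp

/-- Lemma 3.2 of the paper: with `ζ(k,n) := 𝒞(n)·c·(k+1) − 1`, if
`‖J_{1/c}(p) − p‖ ≤ 1/(ζ(k,n)+1)` then `‖J_{c_{n'}}(p) − p‖ ≤ 1/(k+1)` for all `n' ≤ n`. -/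
theorem resolvent_almost_fixed_points
    {H : Type*} [NormedAddCommGroup H] [InnerProductSpace ℝ H] [CompleteSpace H]
    (T : H → Set H) (hT : IsMaximalMonotoneOp T)
    (J : ℝ → H → H) (hJ : IsResolventFamilyOf J T)
    (cs : ℕ → ℝ) (hcs0 : ∀ n, 0 < cs n)
    (c : ℕ) (hc : 0 < c) (hcsc : ∀ n, 1 / (c : ℝ) ≤ cs n)
    (C : ℕ → ℕ) (hC : Monotone C) (hcsC : ∀ n, cs n ≤ (C n : ℝ)) :
    ∀ k n : ℕ, ∀ p : H,
      ‖J (1 / (c : ℝ)) p - p‖ ≤ 1 / (((C n * c * (k+1) - 1 : ℕ) : ℝ) + 1) →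
      ∀ n' ≤ n, ‖J (cs n') p - p‖ ≤ 1 / ((k : ℝ) + 1) :=
  resolvent_almost_fixed_points_general T hT J hJ cs c hc hcsc C hC hcsC
end

section
/- Let H be a real Hilbert space, J : H → H a nonexpansive map, s a fixed point of J, u ∈ H, and N ∈ ℕ \ {0} with N ≥ 2‖u − s‖. Then for every k ∈ ℕ and every monotone function f : ℕ → ℕ, there are n ≤ 24N(f̌^{(R)}(0)+1)² and p ∈ B_N such that ‖J(p) − p‖ ≤ 1/(f(n)+1) and, for all q ∈ B_N, if ‖J(q) − q‖ ≤ 1/(n+1) then ⟪u − p, q − p⟫ ≤ 1/(k+1), where R := 4N⁴(k+1)² and f̌(m) := max{ f(24N(m+1)²), 24N(m+1)² }. -/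
/-!
Let `S m ⊆ B_N` be the set of `1/(m+1)`-approximate fixed points of `J` in `B_N` and
`d m := dist(u, S m)²`. Since `s ∈ S m`, all `d m` lie in `[0, N²/4]`, so along the orbit
`m_i = f̌^{(i)}(0)` some step `i < R` raises `d` by at most `δ = 1/(16N²(k+1)²)`. Take
`p ∈ S m_{i+1}` with `‖u - p‖² < d m_{i+1} + δ` and `n = 24N(m_i+1)²`, so that
`f n, n ≤ m_{i+1}`. For an approximate fixed point `q ∈ B_N` of precision `1/(n+1)`,
nonexpansiveness makes `(1-t)p + tq` an approximate fixed point of precision `1/(m_i+1)`, hence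
no closer to `u` than `√(d m_i)`. Expanding `‖u - ((1-t)p + tq)‖²` with `t = 1/(4N²(k+1))` then
bounds `⟪u - p, q - p⟫`: a quantitative form of the variational inequality characterising the
metric projection onto the fixed points of `J`.
-/

open Metric
open scoped RealInnerProductSpace

theorem exists_lt_sub_le_of_sub_le_nsmul {α : Type*} [AddCommGroup α] [LinearOrder α]
    [IsOrderedCancelAddMonoid α] (a : ℕ → α) {R : ℕ} (hR : R ≠ 0) {δ : α}
    (h : a R - a 0 ≤ R • δ) : ∃ i < R, a (i + 1) - a i ≤ δ := by
  obtain ⟨i, hi, hle⟩ := Finset.exists_le_of_sum_le (Finset.nonempty_range_iff.2 hR)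
    (f := fun i => a (i + 1) - a i) (g := fun _ => δ)
    (by rwa [Finset.sum_range_sub, Finset.sum_const, Finset.card_range])
  exact ⟨i, Finset.mem_range.1 hi, hle⟩

section InfDist

variable {X : Type*} [PseudoMetricSpace X]

theorem exists_dist_sq_lt_infDist_sq_add (x : X) {S : Set X} (hS : S.Nonempty) {δ : ℝ}
    (hδ : 0 < δ) : ∃ y ∈ S, dist x y ^ 2 < infDist x S ^ 2 + δ := by
  obtain ⟨y, hy, hxy⟩ := (infDist_lt_iff hS).1
    (Real.lt_sqrt_of_sq_lt (lt_add_of_pos_right (infDist x S ^ 2) hδ))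
  exact ⟨y, hy, (Real.lt_sqrt dist_nonneg).1 hxy⟩

theorem exists_lt_infDist_sq_succ_sub_le {x y : X} {S : ℕ → Set X} (hy : ∀ i, y ∈ S i)
    {R : ℕ} (hR : R ≠ 0) {δ : ℝ} (hxy : dist x y ^ 2 ≤ R • δ) :
    ∃ i < R, infDist x (S (i + 1)) ^ 2 - infDist x (S i) ^ 2 ≤ δ := by
  refine exists_lt_sub_le_of_sub_le_nsmul (fun i => infDist x (S i) ^ 2) hR ?_
  have hxR := infDist_le_dist_of_mem (x := x) (hy R)
  nlinarith [infDist_nonneg (x := x) (s := S 0), infDist_nonneg (x := x) (s := S R)]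

end InfDist

section ApproxFixedPoints

variable {E : Type*} [SeminormedAddCommGroup E]

def approxFixedPoints (J : E → E) (s : E) (N ε : ℝ) : Set E :=
  closedBall s N ∩ {x | ‖J x - x‖ ≤ ε}

variable {J : E → E} {s : E} {N ε : ℝ}

theorem mem_approxFixedPoints {x : E} :
    x ∈ approxFixedPoints J s N ε ↔ ‖x - s‖ ≤ N ∧ ‖J x - x‖ ≤ ε := by
  rw [approxFixedPoints, Set.mem_inter_iff, mem_closedBall, dist_eq_norm, Set.mem_ofPred_eq]

theorem approxFixedPoints_mono {ε' : ℝ} (h : ε ≤ ε') :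
    approxFixedPoints J s N ε ⊆ approxFixedPoints J s N ε' :=
  Set.inter_subset_inter_right _ fun _ hx => le_trans hx h

theorem self_mem_approxFixedPoints (hs : J s = s) (hN : 0 ≤ N) (hε : 0 ≤ ε) :
    s ∈ approxFixedPoints J s N ε :=
  mem_approxFixedPoints.2 ⟨by simpa using hN, by simpa [hs] using hε⟩

theorem norm_sub_le_of_mem_approxFixedPoints {x y : E} (hx : x ∈ approxFixedPoints J s N ε)
    (hy : y ∈ approxFixedPoints J s N ε) : ‖x - y‖ ≤ 2 * N := by
  rw [← dist_eq_norm, two_mul]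
  exact (dist_triangle_right x y s).trans (add_le_add hx.1 hy.1)

end ApproxFixedPoints

theorem one_div_mul_two_mul_add_one_div_le_one_div_sq {N X n : ℝ} (hN : 1 ≤ N) (hX : 1 ≤ X)
    (hn : 24 * N * X ^ 2 ≤ n) : 1 / (n + 1) * (2 * N + 1 / (n + 1)) ≤ (1 / X) ^ 2 := by
  have hX2 : 1 ≤ X ^ 2 := one_le_pow₀ hX
  have hn0 : 0 < n + 1 := by nlinarith
  rw [div_pow, one_pow, div_mul_eq_mul_div, one_mul, div_le_div_iff₀ hn0 (by positivity)]
  have hε : 1 / (n + 1) ≤ 1 := by rw [div_le_one hn0]; nlinarith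
  nlinarith

theorem mul_sq_div_two_add_div_le_one_div {N K b : ℝ} (hN : 0 < N) (hK : 0 < K) (hb₀ : 0 ≤ b)
    (hb : b ≤ 2 * N) :
    1 / (4 * N ^ 2 * K) * b ^ 2 / 2 + 1 / (16 * N ^ 2 * K ^ 2) / (1 / (4 * N ^ 2 * K))
      ≤ 1 / K := by
  have hb2 : b ^ 2 / (4 * N ^ 2) ≤ 1 := by rw [div_le_one (by positivity)]; nlinarith
  have : 1 / (4 * N ^ 2 * K) * b ^ 2 / 2 + 1 / (16 * N ^ 2 * K ^ 2) / (1 / (4 * N ^ 2 * K))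
      = (b ^ 2 / (4 * N ^ 2) / 2 + 1 / 4) / K := by
    field_simp
    ring
  rw [this]
  gcongr
  linarith

section ConvexCombination

variable {H : Type*} [NormedAddCommGroup H] [InnerProductSpace ℝ H]

theorem norm_sub_convexComb_sq_eq_sub_inner (u p q : H) (t : ℝ) :
    ‖u - ((1 - t) • p + t • q)‖ ^ 2
      = ‖u - p‖ ^ 2 - 2 * t * ⟪u - p, q - p⟫ + t ^ 2 * ‖q - p‖ ^ 2 := by
  rw [show u - ((1 - t) • p + t • q) = (u - p) - t • (q - p) by module, norm_sub_sq_real,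
    real_inner_smul_right, norm_smul, Real.norm_eq_abs, mul_pow, sq_abs]
  ring

theorem norm_sub_convexComb_sq (x p q : H) (t : ℝ) :
    ‖x - ((1 - t) • p + t • q)‖ ^ 2
      = (1 - t) * ‖x - p‖ ^ 2 + t * ‖x - q‖ ^ 2 - t * (1 - t) * ‖q - p‖ ^ 2 := by
  have hq := norm_sub_convexComb_sq_eq_sub_inner x p q 1
  simp only [sub_self, zero_smul, one_smul, zero_add, one_pow, one_mul, mul_one] at hq
  rw [norm_sub_convexComb_sq_eq_sub_inner, hq]
  ring

theorem norm_map_convexComb_sub_sq_le {J : H → H} (hJ : ∀ x y, ‖J x - J y‖ ≤ ‖x - y‖)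
    {p q : H} {t ε : ℝ} (ht₀ : 0 ≤ t) (ht₁ : t ≤ 1)
    (hp : ‖J p - p‖ ≤ ε) (hq : ‖J q - q‖ ≤ ε) :
    ‖J ((1 - t) • p + t • q) - ((1 - t) • p + t • q)‖ ^ 2 ≤ ε * (‖q - p‖ + ε) := by
  set m := (1 - t) • p + t • q
  set b := ‖q - p‖
  have hmp : ‖m - p‖ = t * b := by
    rw [show m - p = t • (q - p) by module, norm_smul, Real.norm_of_nonneg ht₀]
  have hmq : ‖m - q‖ = (1 - t) * b := by
    rw [show m - q = (1 - t) • (p - q) by module, norm_smul, Real.norm_of_nonneg (by linarith),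
      norm_sub_rev]
  have hJmp : ‖J m - p‖ ≤ t * b + ε := by
    linarith [norm_sub_le_norm_sub_add_norm_sub (J m) (J p) p, hJ m p]
  have hJmq : ‖J m - q‖ ≤ (1 - t) * b + ε := by
    linarith [norm_sub_le_norm_sub_add_norm_sub (J m) (J q) q, hJ m q]
  have hp2 := pow_le_pow_left₀ (norm_nonneg _) hJmp 2
  have hq2 := pow_le_pow_left₀ (norm_nonneg _) hJmq 2
  rw [norm_sub_convexComb_sq]
  -- `(1-t)(tb+ε)² + t((1-t)b+ε)² - t(1-t)b² = 4t(1-t)bε + ε² ≤ bε + ε²`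
  nlinarith [mul_le_mul_of_nonneg_left hp2 (sub_nonneg.2 ht₁), mul_le_mul_of_nonneg_left hq2 ht₀,
    mul_nonneg (mul_nonneg (norm_nonneg (q - p)) ((norm_nonneg _).trans hp))
      (sq_nonneg (2 * t - 1))]

theorem convexComb_mem_approxFixedPoints {J : H → H} (hJ : ∀ x y, ‖J x - J y‖ ≤ ‖x - y‖)
    {s p q : H} {N ε η t : ℝ} (hp : p ∈ approxFixedPoints J s N ε)
    (hq : q ∈ approxFixedPoints J s N ε) (ht₀ : 0 ≤ t) (ht₁ : t ≤ 1) (hη : 0 ≤ η)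
    (hεη : ε * (2 * N + ε) ≤ η ^ 2) :
    (1 - t) • p + t • q ∈ approxFixedPoints J s N η := by
  refine ⟨convex_closedBall s N hp.1 hq.1 (sub_nonneg.2 ht₁) ht₀ (sub_add_cancel 1 t), ?_⟩
  rw [Set.mem_ofPred_eq, ← pow_le_pow_iff_left₀ (norm_nonneg _) hη two_ne_zero]
  have hJp := (mem_approxFixedPoints.1 hp).2
  refine (norm_map_convexComb_sub_sq_le hJ ht₀ ht₁ hJp (mem_approxFixedPoints.1 hq).2).trans
    (le_trans ?_ hεη)
  have := norm_sub_le_of_mem_approxFixedPoints hq hp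
  exact mul_le_mul_of_nonneg_left (by linarith) ((norm_nonneg _).trans hJp)

theorem real_inner_le_of_norm_sub_sq_le_convexComb {u p q : H} {t δ : ℝ} (ht : 0 < t)
    (h : ‖u - p‖ ^ 2 ≤ ‖u - ((1 - t) • p + t • q)‖ ^ 2 + 2 * δ) :
    ⟪u - p, q - p⟫ ≤ t * ‖q - p‖ ^ 2 / 2 + δ / t := by
  rw [norm_sub_convexComb_sq_eq_sub_inner] at h
  rw [← sub_nonneg]
  have : t * ‖q - p‖ ^ 2 / 2 + δ / t - ⟪u - p, q - p⟫
      = (t ^ 2 * ‖q - p‖ ^ 2 + 2 * δ - 2 * t * ⟪u - p, q - p⟫) / (2 * t) := by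
    field_simp
  rw [this]
  exact div_nonneg (by linarith) (by positivity)

theorem real_inner_le_of_norm_sub_sq_le_infDist_sq_add {J : H → H}
    (hJ : ∀ x y, ‖J x - J y‖ ≤ ‖x - y‖)
    {s u p q : H} {N X K n : ℝ} (hN : 1 ≤ N) (hX : 1 ≤ X) (hK : 1 ≤ K) (hn : 24 * N * X ^ 2 ≤ n)
    (hp : p ∈ approxFixedPoints J s N (1 / (n + 1)))
    (hq : q ∈ approxFixedPoints J s N (1 / (n + 1)))
    (hpu : ‖u - p‖ ^ 2 ≤ infDist u (approxFixedPoints J s N (1 / X)) ^ 2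
      + 2 * (1 / (16 * N ^ 2 * K ^ 2))) :
    ⟪u - p, q - p⟫ ≤ 1 / K := by
  set t : ℝ := 1 / (4 * N ^ 2 * K)
  have ht₀ : 0 < t := by positivity
  have ht₁ : t ≤ 1 := by rw [div_le_one (by positivity)]; nlinarith
  have hm : (1 - t) • p + t • q ∈ approxFixedPoints J s N (1 / X) :=
    convexComb_mem_approxFixedPoints hJ hp hq ht₀.le ht₁ (by positivity)
      (one_div_mul_two_mul_add_one_div_le_one_div_sq hN hX hn)
  have hclose : ‖u - p‖ ^ 2 ≤ ‖u - ((1 - t) • p + t • q)‖ ^ 2 + 2 * (1 / (16 * N ^ 2 * K ^ 2)) := by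
    have := infDist_le_dist_of_mem (x := u) hm
    rw [dist_eq_norm] at this
    nlinarith [infDist_nonneg (x := u) (s := approxFixedPoints J s N (1 / X))]
  exact (real_inner_le_of_norm_sub_sq_le_convexComb ht₀ hclose).trans
    (mul_sq_div_two_add_div_le_one_div (by positivity) (by positivity) (norm_nonneg _)
      (norm_sub_le_of_mem_approxFixedPoints hq hp))

end ConvexCombination

theorem quantitative_projection_inner_general
    {H : Type*} [NormedAddCommGroup H] [InnerProductSpace ℝ H]
    (J : H → H) (hJ : ∀ x y : H, ‖J x - J y‖ ≤ ‖x - y‖)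
    (s : H) (hs : J s = s) (u : H)
    (N : ℕ) (hN0 : N ≠ 0) (hNu : 2 * ‖u - s‖ ≤ (N : ℝ))
    (k : ℕ) (f : ℕ → ℕ) :
    ∃ n ≤ 24 * N *
        ((fun m => max (f (24*N*(m+1)^2)) (24*N*(m+1)^2))^[4 * N^4 * (k+1)^2] 0 + 1)^2,
      ∃ p : H, ‖p - s‖ ≤ (N : ℝ) ∧
        ‖J p - p‖ ≤ 1 / ((f n : ℝ) + 1) ∧
        ∀ q : H, ‖q - s‖ ≤ (N : ℝ) → ‖J q - q‖ ≤ 1 / ((n : ℝ) + 1) →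
          ⟪u - p, q - p⟫ ≤ 1 / ((k : ℝ) + 1) := by
  set F : ℕ → ℕ := fun m => max (f (24*N*(m+1)^2)) (24*N*(m+1)^2)
  set S : ℕ → Set H := fun i => approxFixedPoints J s N (1 / ((F^[i] 0 : ℝ) + 1))
  set δ : ℝ := 1 / (16 * N ^ 2 * ((k : ℝ) + 1) ^ 2)
  have hN : (1 : ℝ) ≤ N := by exact_mod_cast Nat.one_le_iff_ne_zero.2 hN0
  have hsS : ∀ i, s ∈ S i := fun i => self_mem_approxFixedPoints hs (by positivity) (by positivity)
  obtain ⟨i, hiR, hgap⟩ := exists_lt_infDist_sq_succ_sub_le (x := u) hsS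
    (R := 4 * N ^ 4 * (k + 1) ^ 2) (δ := δ) (by positivity) (by
      rw [dist_eq_norm, nsmul_eq_mul]; push_cast; simp only [δ]; field_simp
      nlinarith [norm_nonneg (u - s)])
  obtain ⟨p, hpS, hpu⟩ := exists_dist_sq_lt_infDist_sq_add u ⟨s, hsS (i + 1)⟩
    (by positivity : 0 < δ)
  set n := 24 * N * (F^[i] 0 + 1) ^ 2
  have hFi : F^[i + 1] 0 = max (f n) n := Function.iterate_succ_apply' F i 0
  have hFid : id ≤ F := fun m => le_max_of_le_right (show m ≤ 24 * N * (m + 1) ^ 2 by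
    nlinarith [Nat.one_le_iff_ne_zero.2 hN0])
  have hpn : p ∈ approxFixedPoints J s N (1 / ((n : ℝ) + 1)) := by
    refine approxFixedPoints_mono (one_div_le_one_div_of_le (by positivity) ?_) hpS
    exact_mod_cast hFi ▸ Nat.add_le_add_right (le_max_right _ _) 1
  refine ⟨n, ?_, p, (mem_approxFixedPoints.1 hpn).1, ?_, fun q hq hqJ => ?_⟩
  · simpa only [n] using Nat.mul_le_mul_left _ (Nat.pow_le_pow_left
      (Nat.add_le_add_right (Function.monotone_iterate_of_id_le hFid hiR.le 0) 1) 2)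
  · refine (mem_approxFixedPoints.1 hpS).2.trans (one_div_le_one_div_of_le (by positivity) ?_)
    exact_mod_cast hFi ▸ Nat.add_le_add_right (le_max_left _ _) 1
  · rw [dist_eq_norm] at hpu
    exact real_inner_le_of_norm_sub_sq_le_infDist_sq_add hJ hN (X := (F^[i] 0 : ℝ) + 1)
      (by simp) (by simp) (by simp only [n]; push_cast; rfl)
      hpn (mem_approxFixedPoints.2 ⟨hq, hqJ⟩) (by linarith)

/-- Quantitative projection argument, inner-product form (Proposition 3.3): for a
nonexpansive `J` with fixed point `s`, `u ∈ H` and `N ≥ 2‖u - s‖`, for every `k` and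
monotone `f` there are `n ≤ 24N(f̌^{(R)}(0)+1)²` (with `R := 4N⁴(k+1)²` and
`f̌(m) := max{f(24N(m+1)²), 24N(m+1)²}`) and `p ∈ B_N` such that
`‖J p - p‖ ≤ 1/(f n + 1)` and every `q ∈ B_N` with `‖J q - q‖ ≤ 1/(n+1)` satisfies
`⟪u - p, q - p⟫ ≤ 1/(k+1)`. -/
theorem quantitative_projection_inner
    {H : Type*} [NormedAddCommGroup H] [InnerProductSpace ℝ H] [CompleteSpace H]
    (J : H → H) (hJ : ∀ x y : H, ‖J x - J y‖ ≤ ‖x - y‖)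
    (s : H) (hs : J s = s) (u : H)
    (N : ℕ) (hN0 : N ≠ 0) (hNu : 2 * ‖u - s‖ ≤ (N : ℝ))
    (k : ℕ) (f : ℕ → ℕ) (hf : Monotone f) :
    ∃ n ≤ 24 * N *
        ((fun m => max (f (24*N*(m+1)^2)) (24*N*(m+1)^2))^[4 * N^4 * (k+1)^2] 0 + 1)^2,
      ∃ p : H, ‖p - s‖ ≤ (N : ℝ) ∧
        ‖J p - p‖ ≤ 1 / ((f n : ℝ) + 1) ∧
        ∀ q : H, ‖q - s‖ ≤ (N : ℝ) → ‖J q - q‖ ≤ 1 / ((n : ℝ) + 1) →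
          ⟪u - p, q - p⟫ ≤ 1 / ((k : ℝ) + 1) :=
  quantitative_projection_inner_general J hJ s hs u N hN0 hNu k f
end

section
/- Let H be a real Hilbert space, J : H → H a nonexpansive map, s a fixed point of J, u ∈ H, and (z_n) a sequence in H. Let ξ : ℕ × ℕ^ℕ → ℕ be a monotone functional such that for every k ∈ ℕ and every monotone f : ℕ → ℕ there is n ≤ ξ(k,f) with ‖J(z_m) − z_m‖ ≤ 1/(k+1) for all m ∈ [n, n+f(n)]. Let N₀ ∈ ℕ be such that ‖z_n − s‖ ≤ N₀ for all n, and let N ≥ max{2‖u − s‖, N₀} with N ∈ ℕ \ {0}. Then for every k ∈ ℕ and every monotone function f : ℕ → ℕ there are n ≤ ψ(k,f) and p ∈ B_N such that ‖J(p) − p‖ ≤ 1/(f(n)+1) and ⟪p − u, p − z_{m+1}⟫ ≤ 1/(k+1) for all m ∈ [n, n+f(n)]; here ψ(k,f) := ξ(24N(ǧ^{(R)}(0)+1)², f+1) with R := N⁴(k+1)², ǧ(m) := max{ g(24N(m+1)²), 24N(m+1)² }, g(m) := f(ξ(m, f+1)), and f+1 denotes the function m ↦ f(m)+1. -/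
open scoped RealInnerProductSpace

/-- `g ≤* f` : strong majorization for functions `ℕ → ℕ`. -/
def FunMaj (g f : ℕ → ℕ) : Prop := ∀ n : ℕ, ∀ m ≤ n, g m ≤ f n ∧ f m ≤ f n

/-- A functional `Φ : ℕ × ℕ^ℕ → ℕ` is monotone. -/
def MonotoneFunctional (Φ : ℕ → (ℕ → ℕ) → ℕ) : Prop :=
  ∀ n : ℕ, ∀ f : ℕ → ℕ, ∀ m ≤ n, ∀ g : ℕ → ℕ, FunMaj g f → Φ m g ≤ Φ n f

/-- `g(m) := f(ξ(m, f+1))`. -/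
def gAux (ξ : ℕ → (ℕ → ℕ) → ℕ) (f : ℕ → ℕ) (m : ℕ) : ℕ := f (ξ m (fun i => f i + 1))

/-- `ǧ(m) := max{g(24N(m+1)²), 24N(m+1)²}`. -/
def gCheck (ξ : ℕ → (ℕ → ℕ) → ℕ) (N : ℕ) (f : ℕ → ℕ) (m : ℕ) : ℕ :=
  max (gAux ξ f (24*N*(m+1)^2)) (24*N*(m+1)^2)

/-- `ψ(k,f) := ξ(24N(ǧ^{(R)}(0)+1)², f+1)` with `R := N⁴(k+1)²`. -/
def psiAux (ξ : ℕ → (ℕ → ℕ) → ℕ) (N k : ℕ) (f : ℕ → ℕ) : ℕ :=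
  ξ (24 * N * ((gCheck ξ N f)^[N^4 * (k+1)^2] 0 + 1)^2) (fun i => f i + 1)

/-! If the conclusion failed, every admissible point `p ∈ B_N` would have a witness `z (m+1)` with
`⟪p - u, p - z (m+1)⟫ > 1/(k+1)`. Stepping from `p` towards the witness by the weight
`1/(4N²(k+1))` lowers `‖p - u‖²` by `1/(4N²(k+1)²)`, stays in `B_N`, and, by nonexpansiveness,
keeps the defect `‖J p - p‖` small as long as the witness is a good enough approximate fixed point.
Querying `ξ` at the precisions `24N(ǧ^{(r)}(0)+1)²` for `r = R-1, …, 0` provides such witnesses,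
at indices below `ψ(k, f)`, for `R = N⁴(k+1)²` consecutive steps starting from `s`; but then
`‖p - u‖²` would fall below `‖s - u‖² - N²/4 ≤ 0`. -/

section Hilbert

variable {H : Type*} [NormedAddCommGroup H] [InnerProductSpace ℝ H]

lemma norm_sub_smul_add_smul_sq (a x y : H) (t : ℝ) :
    ‖a - ((1 - t) • x + t • y)‖ ^ 2 =
      (1 - t) * ‖a - x‖ ^ 2 + t * ‖a - y‖ ^ 2 - t * (1 - t) * ‖x - y‖ ^ 2 := by
  have hcombo : a - ((1 - t) • x + t • y) = (1 - t) • (a - x) + t • (a - y) := by module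
  have hxy : x - y = (a - y) - (a - x) := by abel
  rw [hcombo, hxy, norm_sub_sq_real (a - y) (a - x), norm_add_sq_real, norm_smul, norm_smul,
    real_inner_smul_left, real_inner_smul_right, real_inner_comm (a - x)]
  simp only [Real.norm_eq_abs, mul_pow, sq_abs]
  ring

lemma norm_map_sub_self_combo_sq_le {J : H → H} (hJ : ∀ x y, ‖J x - J y‖ ≤ ‖x - y‖)
    {x y : H} {t δ : ℝ} (ht₀ : 0 ≤ t) (ht₁ : t ≤ 1)
    (hx : ‖J x - x‖ ≤ δ) (hy : ‖J y - y‖ ≤ δ) :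
    ‖J ((1 - t) • x + t • y) - ((1 - t) • x + t • y)‖ ^ 2 ≤ ‖x - y‖ * δ + δ ^ 2 := by
  set w := (1 - t) • x + t • y
  have hwx : ‖J w - x‖ ≤ t * ‖x - y‖ + δ := calc
    ‖J w - x‖ ≤ ‖J w - J x‖ + ‖J x - x‖ := norm_sub_le_norm_sub_add_norm_sub _ _ _
    _ ≤ ‖w - x‖ + δ := add_le_add (hJ w x) hx
    _ = t * ‖x - y‖ + δ := by
      rw [show w - x = t • (y - x) by module, norm_smul, norm_sub_rev y x, Real.norm_of_nonneg ht₀]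
  have hwy : ‖J w - y‖ ≤ (1 - t) * ‖x - y‖ + δ := calc
    ‖J w - y‖ ≤ ‖J w - J y‖ + ‖J y - y‖ := norm_sub_le_norm_sub_add_norm_sub _ _ _
    _ ≤ ‖w - y‖ + δ := add_le_add (hJ w y) hy
    _ = (1 - t) * ‖x - y‖ + δ := by
      rw [show w - y = (1 - t) • (x - y) by module, norm_smul,
        Real.norm_of_nonneg (sub_nonneg.2 ht₁)]
  have hδ : 0 ≤ δ := (norm_nonneg _).trans hx
  rw [norm_sub_smul_add_smul_sq]
  nlinarith [mul_le_mul_of_nonneg_left (pow_le_pow_left₀ (norm_nonneg _) hwx 2) (sub_nonneg.2 ht₁),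
    mul_le_mul_of_nonneg_left (pow_le_pow_left₀ (norm_nonneg _) hwy 2) ht₀,
    mul_nonneg (mul_nonneg (norm_nonneg (x - y)) hδ) (sq_nonneg (2 * t - 1))]

lemma norm_smul_add_smul_sub_sq_lt {x y u : H} {ε D : ℝ} (hε : 0 < ε) (hD : 0 < D)
    (hxy : ‖x - y‖ ≤ D) (hinner : ε < ⟪x - u, x - y⟫) :
    ‖(1 - ε / D ^ 2) • x + (ε / D ^ 2) • y - u‖ ^ 2 < ‖x - u‖ ^ 2 - (ε / D) ^ 2 := by
  set t := ε / D ^ 2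
  have ht : 0 < t := by positivity
  rw [show (1 - t) • x + t • y - u = (x - u) - t • (x - y) by module, norm_sub_sq_real,
    real_inner_smul_right, norm_smul, Real.norm_of_nonneg ht.le]
  have hsq : ‖x - y‖ ^ 2 ≤ D ^ 2 := pow_le_pow_left₀ (norm_nonneg _) hxy 2
  have hD2 : t * D ^ 2 = ε := div_mul_cancel₀ ε (by positivity)
  have : (ε / D) ^ 2 = t * ε := by rw [div_pow, ← hD2]; field_simp
  nlinarith [mul_le_mul_of_nonneg_left hsq (sq_nonneg t), mul_lt_mul_of_pos_left hinner ht]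

lemma exists_descent_step {J : H → H} (hJ : ∀ x y, ‖J x - J y‖ ≤ ‖x - y‖)
    {s u x y : H} {ρ ε δ η : ℝ} (hρ : 0 < ρ) (hε : 0 < ε) (hερ : ε ≤ (2 * ρ) ^ 2)
    (hx : ‖x - s‖ ≤ ρ) (hy : ‖y - s‖ ≤ ρ) (hJx : ‖J x - x‖ ≤ δ) (hJy : ‖J y - y‖ ≤ δ)
    (hδη : 2 * ρ * δ + δ ^ 2 ≤ η ^ 2) (hη : 0 ≤ η) (hinner : ε < ⟪x - u, x - y⟫) :
    ∃ w : H, ‖w - s‖ ≤ ρ ∧ ‖J w - w‖ ≤ η ∧ ‖w - u‖ ^ 2 < ‖x - u‖ ^ 2 - (ε / (2 * ρ)) ^ 2 := by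
  set t := ε / (2 * ρ) ^ 2
  have ht₀ : 0 ≤ t := by positivity
  have ht₁ : t ≤ 1 := div_le_one_of_le₀ hερ (sq_nonneg _)
  have hxy : ‖x - y‖ ≤ 2 * ρ := by
    rw [← dist_eq_norm]
    linarith [dist_triangle_right x y s, dist_eq_norm x s, dist_eq_norm y s]
  refine ⟨(1 - t) • x + t • y, ?_, ?_, norm_smul_add_smul_sub_sq_lt hε (by positivity) hxy hinner⟩
  · rw [← mem_closedBall_iff_norm] at hx hy ⊢
    exact convex_closedBall s ρ hx hy (sub_nonneg.2 ht₁) ht₀ (sub_add_cancel 1 t)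
  · have hδ : 0 ≤ δ := (norm_nonneg _).trans hJx
    refine (sq_le_sq₀ (norm_nonneg _) hη).1 ?_
    calc _ ≤ ‖x - y‖ * δ + δ ^ 2 := norm_map_sub_self_combo_sq_le hJ ht₀ ht₁ hJx hJy
      _ ≤ 2 * ρ * δ + δ ^ 2 := by gcongr
      _ ≤ η ^ 2 := hδη

end Hilbert

lemma false_of_descent {α : Type*} (P : ℕ → α → Prop) (Φ : α → ℝ) (hΦ : ∀ a, 0 ≤ Φ a)
    {δ : ℝ} {R : ℕ} (hR : 0 < R) {a₀ : α} (ha₀ : P R a₀) (hΦa₀ : Φ a₀ ≤ R * δ)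
    (hstep : ∀ r < R, ∀ a, P (r + 1) a → ∃ b, P r b ∧ Φ b < Φ a - δ) : False := by
  have descend : ∀ j < R, ∃ a, P (R - 1 - j) a ∧ Φ a < Φ a₀ - (j + 1) * δ := by
    intro j
    induction j with
    | zero =>
      intro _
      obtain ⟨b, hb, hΦb⟩ := hstep (R - 1) (by omega) a₀ (by rwa [Nat.sub_add_cancel hR])
      exact ⟨b, hb, by simpa using hΦb⟩
    | succ j ih =>
      intro hj
      obtain ⟨a, ha, hΦa⟩ := ih (by omega)
      obtain ⟨b, hb, hΦb⟩ := hstep (R - 1 - (j + 1)) (by omega) a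
        (by rwa [show R - 1 - (j + 1) + 1 = R - 1 - j by omega])
      exact ⟨b, hb, by push_cast; linarith⟩
  obtain ⟨a, _, hΦa⟩ := descend (R - 1) (by omega)
  rw [show ((R - 1 : ℕ) : ℝ) + 1 = R by rw [Nat.cast_sub hR, Nat.cast_one]; ring] at hΦa
  linarith [hΦ a]

section Indices

variable {ξ : ℕ → (ℕ → ℕ) → ℕ} {N : ℕ} {f : ℕ → ℕ}

lemma Monotone.funMaj_self {F : ℕ → ℕ} (hF : Monotone F) : FunMaj F F :=
  fun _ _ hmn => ⟨hF hmn, hF hmn⟩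

lemma le_gCheck_iterate_succ (r : ℕ) :
    24 * N * ((gCheck ξ N f)^[r] 0 + 1) ^ 2 ≤ (gCheck ξ N f)^[r + 1] 0 := by
  rw [Function.iterate_succ_apply']
  exact le_max_right _ _

lemma monotone_gCheck_iterate (hN : N ≠ 0) : Monotone fun r => (gCheck ξ N f)^[r] 0 :=
  monotone_nat_of_le_succ fun r => by
    have hsq : (gCheck ξ N f)^[r] 0 + 1 ≤ ((gCheck ξ N f)^[r] 0 + 1) ^ 2 :=
      Nat.le_self_pow two_ne_zero _
    have hmul : ((gCheck ξ N f)^[r] 0 + 1) ^ 2 ≤ 24 * N * ((gCheck ξ N f)^[r] 0 + 1) ^ 2 :=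
      Nat.le_mul_of_pos_left _ (by positivity)
    have := le_gCheck_iterate_succ (ξ := ξ) (f := f) (N := N) r
    omega

lemma exists_indices_le_psiAux (hξmono : MonotoneFunctional ξ) (hN : N ≠ 0) (hf : Monotone f)
    {G : ℕ → ℕ → Prop}
    (hξ : ∀ k : ℕ, ∀ f : ℕ → ℕ, Monotone f → ∃ n ≤ ξ k f, ∀ m, n ≤ m → m ≤ n + f n → G k m)
    (k : ℕ) :
    ∃ n : ℕ → ℕ, ∀ r ≤ N ^ 4 * (k + 1) ^ 2, n r ≤ psiAux ξ N k f ∧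
      f (n r) ≤ (gCheck ξ N f)^[r + 1] 0 ∧
      ∀ m, n r ≤ m → m ≤ n r + f (n r) + 1 → G (24 * N * ((gCheck ξ N f)^[r] 0 + 1) ^ 2) m := by
  have hF : Monotone fun i => f i + 1 := fun a b h => Nat.add_le_add_right (hf h) 1
  choose n hnξ hnG using fun r => hξ (24 * N * ((gCheck ξ N f)^[r] 0 + 1) ^ 2) _ hF
  refine ⟨n, fun r hr => ⟨?_, ?_, hnG r⟩⟩
  · refine (hnξ r).trans (hξmono _ _ _ ?_ _ hF.funMaj_self)
    gcongr
    exact monotone_gCheck_iterate hN hr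
  · rw [Function.iterate_succ_apply']
    exact (hf (hnξ r)).trans (le_max_left _ _)

end Indices

lemma two_mul_div_add_sq_le {N V : ℝ} (hN : 1 ≤ N) (hV : 1 ≤ V) :
    2 * N * (1 / (24 * N * V ^ 2 + 1)) + (1 / (24 * N * V ^ 2 + 1)) ^ 2 ≤ (1 / V) ^ 2 := by
  have ha : 0 < 24 * N * V ^ 2 + 1 := by positivity
  rw [one_div_pow, one_div_pow, mul_one_div, div_add_div _ _ ha.ne' (by positivity),
    div_le_div_iff₀ (by positivity) (by positivity)]
  nlinarith [mul_le_mul_of_nonneg_left hN (by positivity : (0:ℝ) ≤ V ^ 2),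
    mul_le_mul_of_nonneg_left hV (by positivity : (0:ℝ) ≤ V), mul_pos ha ha]

theorem removal_weak_compactness_general
    {H : Type*} [NormedAddCommGroup H] [InnerProductSpace ℝ H]
    (J : H → H) (hJ : ∀ x y : H, ‖J x - J y‖ ≤ ‖x - y‖)
    (s : H) (hs : J s = s) (u : H) (z : ℕ → H)
    (ξ : ℕ → (ℕ → ℕ) → ℕ) (hξmono : MonotoneFunctional ξ)
    (hξ : ∀ k : ℕ, ∀ f : ℕ → ℕ, Monotone f → ∃ n ≤ ξ k f,
      ∀ m : ℕ, n ≤ m → m ≤ n + f n → ‖J (z m) - z m‖ ≤ 1 / ((k : ℝ) + 1))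
    (N₀ : ℕ) (hN₀ : ∀ n, ‖z n - s‖ ≤ (N₀ : ℝ))
    (N : ℕ) (hN0 : N ≠ 0) (hNu : 2 * ‖u - s‖ ≤ (N : ℝ)) (hNN₀ : N₀ ≤ N)
    (k : ℕ) (f : ℕ → ℕ) (hf : Monotone f) :
    ∃ n ≤ psiAux ξ N k f, ∃ p : H, ‖p - s‖ ≤ (N : ℝ) ∧
      ‖J p - p‖ ≤ 1 / ((f n : ℝ) + 1) ∧
      ∀ m : ℕ, n ≤ m → m ≤ n + f n →
        ⟪p - u, p - z (m+1)⟫ ≤ 1 / ((k : ℝ) + 1) := by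
  have hN : (1 : ℝ) ≤ N := Nat.one_le_cast.2 (Nat.one_le_iff_ne_zero.2 hN0)
  have hz : ∀ m, ‖z m - s‖ ≤ N := fun m => (hN₀ m).trans (Nat.cast_le.2 hNN₀)
  obtain ⟨n, hn⟩ := exists_indices_le_psiAux hξmono hN0 hf hξ k
  by_contra! hcon
  refine false_of_descent
    (fun r q => ‖q - s‖ ≤ N ∧ ‖J q - q‖ ≤ 1 / (((gCheck ξ N f)^[r] 0 : ℝ) + 1))
    (fun q => ‖q - u‖ ^ 2) (fun _ => sq_nonneg _) (δ := (1 / ((k : ℝ) + 1) / (2 * N)) ^ 2)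
    (R := N ^ 4 * (k + 1) ^ 2) (by positivity) (a₀ := s)
    ⟨by simp, by rw [hs, sub_self, norm_zero]; positivity⟩ ?_ ?_
  · have hsu : ‖s - u‖ ≤ N / 2 := by rw [norm_sub_rev]; linarith
    calc ‖s - u‖ ^ 2 ≤ (N / 2) ^ 2 := pow_le_pow_left₀ (norm_nonneg _) hsu 2
      _ = _ := by push_cast; field_simp
  · rintro r hr q ⟨hq, hJq⟩
    obtain ⟨hnψ, hfn, hgood⟩ := hn r hr.le
    obtain ⟨m, hm₁, hm₂, hinner⟩ := hcon (n r) hnψ q hq (hJq.trans (Nat.one_div_le_one_div hfn))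
    have hε : 1 / ((k : ℝ) + 1) ≤ (2 * N) ^ 2 := by
      rw [div_le_iff₀ (by positivity)]
      nlinarith
    have hbudget := two_mul_div_add_sq_le hN (V := ((gCheck ξ N f)^[r] 0 : ℝ) + 1) (by simp)
    obtain ⟨w, hws, hJw, hdescent⟩ := exists_descent_step hJ (by positivity) (by positivity) hε hq
      (hz (m + 1)) (hJq.trans (Nat.one_div_le_one_div (le_gCheck_iterate_succ r)))
      (hgood (m + 1) (by omega) (by omega)) (by push_cast; exact hbudget) (by positivity) hinner
    exact ⟨w, ⟨hws, hJw⟩, hdescent⟩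

/-- Proposition 3.4: elimination of sequential weak compactness. -/
theorem removal_weak_compactness
    {H : Type*} [NormedAddCommGroup H] [InnerProductSpace ℝ H] [CompleteSpace H]
    (J : H → H) (hJ : ∀ x y : H, ‖J x - J y‖ ≤ ‖x - y‖)
    (s : H) (hs : J s = s) (u : H) (z : ℕ → H)
    (ξ : ℕ → (ℕ → ℕ) → ℕ) (hξmono : MonotoneFunctional ξ)
    (hξ : ∀ k : ℕ, ∀ f : ℕ → ℕ, Monotone f → ∃ n ≤ ξ k f,
      ∀ m : ℕ, n ≤ m → m ≤ n + f n → ‖J (z m) - z m‖ ≤ 1 / ((k : ℝ) + 1))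
    (N₀ : ℕ) (hN₀ : ∀ n, ‖z n - s‖ ≤ (N₀ : ℝ))
    (N : ℕ) (hN0 : N ≠ 0) (hNu : 2 * ‖u - s‖ ≤ (N : ℝ)) (hNN₀ : N₀ ≤ N)
    (k : ℕ) (f : ℕ → ℕ) (hf : Monotone f) :
    ∃ n ≤ psiAux ξ N k f, ∃ p : H, ‖p - s‖ ≤ (N : ℝ) ∧
      ‖J p - p‖ ≤ 1 / ((f n : ℝ) + 1) ∧
      ∀ m : ℕ, n ≤ m → m ≤ n + f n →
        ⟪p - u, p - z (m+1)⟫ ≤ 1 / ((k : ℝ) + 1) :=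
  removal_weak_compactness_general J hJ s hs u z ξ hξmono hξ N₀ hN₀ N hN0 hNu hNN₀ k f hf
end

section
/- Let (s_n) be a sequence of nonnegative real numbers and D ∈ ℕ a positive upper bound on (s_n). Let (λ_n) ⊂ (0,1), (r_n), (v_n) be real sequences and (γ_n) ⊂ [0,∞), and let L : ℕ → ℕ be a monotone function satisfying ∑_{i=1}^{L(k)} λ_i ≥ k for all k ∈ ℕ. For natural numbers k, n, p assume: (i) for all m ∈ [n,p], v_m ≤ 1/(4(k+1)(p+1)) and r_m ≤ 1/(4(k+1)); (ii) for all m ∈ ℕ, ∑_{i=n}^{n+m} γ_i ≤ 1/(4(k+1)); (iii) for all m ∈ ℕ, s_{m+1} ≤ (1 − λ_m)(s_m + v_m) + λ_m r_m + γ_m. Then s_m ≤ 1/(k+1) for all m ∈ [σ(k,n), p], where σ(k,n) := L(n + ⌈ln(4D(k+1))⌉) + 1. -/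
/-!
Unrolling the recursion from `n` to `m` bounds `s m` by `P * s n + (1 - P) * A + (m - n) * B +
∑ γ`, where `P = ∏ (1 - λ_i)`, `A` bounds the `r_i` and `B` bounds the `v_i`. Since
`1 - x ≤ exp (-x)`, the product is at most `exp (-∑ λ_i)`, and the divergence rate `L` makes
`∑_{i ∈ [n, m)} λ_i ≥ ⌈ln (4D(k+1))⌉`, so `P * s n ≤ P * D ≤ 1/(4(k+1))`. With `B = 1/(4(k+1)(p+1))`
each of the four terms is at most `1/(4(k+1))`.
-/

open Finset Real

theorem prod_one_sub_le_exp_neg_sum {ι : Type*} (t : Finset ι) (f : ι → ℝ)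
    (hf : ∀ i ∈ t, f i ≤ 1) : ∏ i ∈ t, (1 - f i) ≤ exp (-∑ i ∈ t, f i) := by
  rw [← sum_neg_distrib, exp_sum]
  exact prod_le_prod (fun i hi => sub_nonneg.2 (hf i hi)) fun i _ => one_sub_le_exp_neg (f i)

theorem mul_exp_neg_natCeil_log_le_one {x : ℝ} (hx : 0 ≤ x) : x * exp (-⌈log x⌉₊) ≤ 1 := by
  rcases hx.eq_or_lt with rfl | hx
  · simp
  calc x * exp (-⌈log x⌉₊) ≤ x * exp (-log x) := by
        gcongr
        exact Nat.le_ceil _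
    _ = 1 := by rw [exp_neg, exp_log hx, mul_inv_cancel₀ hx.ne']

theorem le_of_le_sum_Icc_one {lam : ℕ → ℝ} (hlam : ∀ i, lam i ≤ 1) {j l : ℕ}
    (h : (j : ℝ) ≤ ∑ i ∈ Icc 1 l, lam i) : j ≤ l := by
  have : ∑ i ∈ Icc 1 l, lam i ≤ l := by
    simpa using sum_le_sum fun i (_ : i ∈ Icc 1 l) => hlam i
  exact_mod_cast h.trans this

section XuRecursion

variable {lam : ℕ → ℝ} (hlam : ∀ i, lam i ∈ Set.Icc (0 : ℝ) 1)
include hlam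

theorem le_sum_Ico_of_le_sum_Icc_one {n c l m : ℕ} (hl : l < m)
    (h : ((n + c : ℕ) : ℝ) ≤ ∑ i ∈ Icc 1 l, lam i) : (c : ℝ) ≤ ∑ i ∈ Ico n m, lam i := by
  have hnm : n ≤ m := by have := le_of_le_sum_Icc_one (fun i => (hlam i).2) h; omega
  have hhead : ∑ i ∈ range n, lam i ≤ n := by
    simpa using sum_le_sum fun i (_ : i ∈ range n) => (hlam i).2
  have hall : ∑ i ∈ Icc 1 l, lam i ≤ ∑ i ∈ range m, lam i :=
    sum_le_sum_of_subset_of_nonneg (fun i hi => by simp only [mem_Icc, mem_range] at hi ⊢; omega)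
      fun i _ _ => (hlam i).1
  rw [← sum_range_add_sum_Ico _ hnm] at hall
  push_cast at h
  linarith

theorem le_of_xu_recursion {s r v γ : ℕ → ℝ} {A B : ℝ} (hB : 0 ≤ B) (hγ : ∀ i, 0 ≤ γ i)
    (hrec : ∀ i, s (i + 1) ≤ (1 - lam i) * (s i + v i) + lam i * r i + γ i)
    {n q : ℕ} (hnq : n ≤ q) (hv : ∀ i, n ≤ i → i < q → v i ≤ B)
    (hr : ∀ i, n ≤ i → i < q → r i ≤ A) :
    s q ≤ (∏ i ∈ Ico n q, (1 - lam i)) * s n + (1 - ∏ i ∈ Ico n q, (1 - lam i)) * A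
      + (q - n : ℕ) * B + ∑ i ∈ Ico n q, γ i := by
  induction q, hnq using Nat.le_induction with
  | base => simp
  | succ q hnq ih =>
    have ih := ih (fun i hi hiq => hv i hi (by omega)) (fun i hi hiq => hr i hi (by omega))
    have hvq := hv q hnq q.lt_succ_self
    have hrq := hr q hnq q.lt_succ_self
    obtain ⟨hl0, hl1⟩ := hlam q
    have hγsum : 0 ≤ ∑ i ∈ Ico n q, γ i := sum_nonneg fun i _ => hγ i
    rw [prod_Ico_succ_top hnq, sum_Ico_succ_top hnq, Nat.sub_add_comm hnq]
    push_cast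
    nlinarith [hrec q, mul_le_mul_of_nonneg_left (add_le_add ih hvq) (sub_nonneg.2 hl1),
      mul_le_mul_of_nonneg_left hrq hl0, mul_nonneg hl0 hγsum,
      mul_nonneg (mul_nonneg hl0 (Nat.cast_nonneg (q - n) : (0 : ℝ) ≤ (q - n : ℕ))) hB]

end XuRecursion

theorem quantitative_xu_lemma_general
    (s lam r v γ : ℕ → ℝ)
    (D : ℕ)
    (hsD : ∀ n, s n ≤ (D : ℝ))
    (hlam : ∀ n, lam n ∈ Set.Ioo (0:ℝ) 1)
    (hγ0 : ∀ n, 0 ≤ γ n)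
    (L : ℕ → ℕ)
    (hLdiv : ∀ k : ℕ, (k : ℝ) ≤ ∑ i ∈ Finset.Icc 1 (L k), lam i)
    (k n p : ℕ)
    (hi : ∀ m : ℕ, n ≤ m → m ≤ p →
      v m ≤ 1 / (4 * ((k:ℝ)+1) * ((p:ℝ)+1)) ∧ r m ≤ 1 / (4 * ((k:ℝ)+1)))
    (hii : ∀ m : ℕ, ∑ i ∈ Finset.Icc n (n+m), γ i ≤ 1 / (4 * ((k:ℝ)+1)))
    (hiii : ∀ m : ℕ, s (m+1) ≤ (1 - lam m) * (s m + v m) + lam m * r m + γ m) :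
    ∀ m : ℕ, L (n + ⌈Real.log (4 * (D:ℝ) * ((k:ℝ)+1))⌉₊) + 1 ≤ m → m ≤ p →
      s m ≤ 1 / ((k:ℝ)+1) := by
  intro m hLm hmp
  set c := ⌈log (4 * D * (k + 1))⌉₊
  set A : ℝ := 1 / (4 * ((k:ℝ)+1))
  set B : ℝ := 1 / (4 * ((k:ℝ)+1) * ((p:ℝ)+1))
  set P := ∏ i ∈ Ico n m, (1 - lam i)
  have hlam' : ∀ i, lam i ∈ Set.Icc (0 : ℝ) 1 := fun i => Set.Ioo_subset_Icc_self (hlam i)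
  have hnm : n ≤ m := by
    have := le_of_le_sum_Icc_one (fun i => (hlam i).2.le) (hLdiv (n + c)); omega
  have hunrolled := le_of_xu_recursion hlam' (by positivity) hγ0 hiii hnm
    (fun i hni him => (hi i hni (by omega)).1) (fun i hni him => (hi i hni (by omega)).2)
  have hP0 : 0 ≤ P := prod_nonneg fun i _ => sub_nonneg.2 (hlam i).2.le
  have hP : P ≤ exp (-c) :=
    (prod_one_sub_le_exp_neg_sum _ _ fun i _ => (hlam i).2.le).trans
      (by gcongr; exact le_sum_Ico_of_le_sum_Icc_one hlam' hLm (hLdiv _))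
  have hPs : P * s n ≤ A := by
    have hx := mul_exp_neg_natCeil_log_le_one (x := 4 * D * (k + 1)) (by positivity)
    calc P * s n ≤ P * D := mul_le_mul_of_nonneg_left (hsD n) hP0
      _ ≤ exp (-c) * D := by gcongr
      _ ≤ A := by rw [le_div_iff₀ (by positivity)]; linarith
  have hPA : (1 - P) * A ≤ A := mul_le_of_le_one_left (by positivity) (by linarith)
  have hvB : ((m - n : ℕ) : ℝ) * B ≤ A :=
    calc ((m - n : ℕ) : ℝ) * B ≤ (p + 1) * B := by
          gcongr; exact_mod_cast (by omega : m - n ≤ p + 1)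
      _ = A := by simp only [A, B]; field_simp
  have hγA : ∑ i ∈ Ico n m, γ i ≤ A :=
    (sum_le_sum_of_subset_of_nonneg (fun i hi => by simp only [mem_Ico, mem_Icc] at hi ⊢; omega)
      fun i _ _ => hγ0 i).trans (hii (m - n))
  have hA : 4 * A = 1 / (k + 1) := by simp only [A]; field_simp
  linarith

/-- Quantitative version of Xu's lemma (Lemma 3.5). -/
theorem quantitative_xu_lemma
    (s lam r v γ : ℕ → ℝ)
    (D : ℕ) (hD : 0 < D)
    (hs0 : ∀ n, 0 ≤ s n) (hsD : ∀ n, s n ≤ (D : ℝ))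
    (hlam : ∀ n, lam n ∈ Set.Ioo (0:ℝ) 1)
    (hγ0 : ∀ n, 0 ≤ γ n)
    (L : ℕ → ℕ) (hL : Monotone L)
    (hLdiv : ∀ k : ℕ, (k : ℝ) ≤ ∑ i ∈ Finset.Icc 1 (L k), lam i)
    (k n p : ℕ)
    (hi : ∀ m : ℕ, n ≤ m → m ≤ p →
      v m ≤ 1 / (4 * ((k:ℝ)+1) * ((p:ℝ)+1)) ∧ r m ≤ 1 / (4 * ((k:ℝ)+1)))
    (hii : ∀ m : ℕ, ∑ i ∈ Finset.Icc n (n+m), γ i ≤ 1 / (4 * ((k:ℝ)+1)))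
    (hiii : ∀ m : ℕ, s (m+1) ≤ (1 - lam m) * (s m + v m) + lam m * r m + γ m) :
    ∀ m : ℕ, L (n + ⌈Real.log (4 * (D:ℝ) * ((k:ℝ)+1))⌉₊) + 1 ≤ m → m ≤ p →
      s m ≤ 1 / ((k:ℝ)+1) :=
  quantitative_xu_lemma_general s lam r v γ D hsD hlam hγ0 L hLdiv k n p hi hii hiii
end

section
/- Let H be a real Hilbert space, T : H → 2^H a maximal monotone operator with s ∈ S := T⁻¹(0), and let (z_n) be generated by the iteration (mPPA): z_{n+1} = λ_n u + γ_n z_n + δ_n J_{c_n}(z_n) + e_n, where u, z₀ ∈ H, (λ_n), (γ_n), (δ_n) ⊂ (0,1) with λ_n + γ_n + δ_n = 1, c_n > 0 and e_n ∈ H. Assume there are a, c ∈ ℕ \ {0} and monotone functions ℓ, Γ, E : ℕ → ℕ with: (Q1) λ_n ≤ 1/(k+1) for all n ≥ ℓ(k); (Q3) 1/a ≤ γ_m ≤ 1 − 1/a for all m; (Q4) c_n ≥ 1/c for all n; (Q5) |c_{n+1} − c_n| ≤ 1/(k+1) for all n ≥ Γ(k); (Q6) ∑_{i=E(k)+1}^{E(k)+n}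 ‖e_i‖ ≤ 1/(k+1) for all k, n. Let N₁, N₂, N₃ ∈ ℕ be such that N₁ ≥ ‖u‖, N₂ ≥ ∑_{i=0}^{E(0)} ‖e_i‖ + 1, and N₃ ≥ max{‖u − s‖, ‖z₀ − s‖}; set N₀ := N₂ + N₃. Then: ‖z_n − s‖ ≤ N₀ for all n; moreover, writing z_{n+1} = γ_n z_n + (1 − γ_n) w_n (i.e. w_n := (z_{n+1} − γ_n z_n)/(1 − γ_n)), one has ‖w_n − s‖ ≤ 2aN₀ for all n, and for every k ∈ ℕ and every n ≥ ν(k), ‖w_{n+1} − w_n‖ − ‖z_{n+1} − z_n‖ ≤ 1/(k+1), where ν(k) := max{ Γ(10acN₀(k+1)), ℓ(10a(N₀+N₁+N₃)(k+1)), E(5a(k+1)) + 1 }. -/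
open scoped Pointwise RealInnerProductSpace

/-- `ν(k) := max{Γ(10acN₀(k+1)), ℓ(10a(N₀+N₁+N₃)(k+1)), E(5a(k+1))+1}`. -/
def nuFun (ℓ Γ E : ℕ → ℕ) (a c N₀ N₁ N₃ k : ℕ) : ℕ :=
  max (Γ (10*a*c*N₀*(k+1))) (max (ℓ (10*a*(N₀+N₁+N₃)*(k+1))) (E (5*a*(k+1)) + 1))

/-! Each resolvent `J c` is nonexpansive and fixes `s`, so `z (n+1) - s` is a convex combination
of vectors no longer than `max ‖u - s‖ ‖z n - s‖`, plus `e n`; summing the errors bounds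
`‖z n - s‖`, and `w n` is then controlled through `1 - γ n ≥ 1/a`. Solving for `w n` gives
`w n = α n • u + (1 - α n) • J (c n) (z n) + (1 - γ n)⁻¹ • e n` with
`α n = λ n / (1 - γ n) ≤ a λ n`, so `‖w (n+1) - w n‖ - ‖z (n+1) - z n‖` is bounded by
`|α (n+1) - α n| ‖u - J (c n) (z n)‖`, the resolvent-identity term
`|c (n+1) - c n| / c n · ‖z n - J (c n) (z n)‖` and the two error terms; beyond `ν k` each of
these four is at most `1 / (5 (k+1))`. -/

open Finset

section Resolvent

variable {H : Type*} [NormedAddCommGroup H] [InnerProductSpace ℝ H] {T : H → Set H}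
  {J : ℝ → H → H}

theorem IsMonotoneOp.norm_sub_le_of_sub_mem_smul (hT : IsMonotoneOp T) {c : ℝ} (hc : 0 < c)
    {x x' p p' : H} (hp : x - p ∈ c • T p) (hp' : x' - p' ∈ c • T p') :
    ‖p - p'‖ ≤ ‖x - x'‖ := by
  obtain ⟨v, hv, hcv⟩ := hp
  obtain ⟨v', hv', hcv'⟩ := hp'
  have hsplit : x - x' = (p - p') + c • (v - v') := by
    simp only [smul_sub] at hcv hcv' ⊢
    rw [hcv, hcv']; abel
  have hsq : ‖p - p'‖ ^ 2 ≤ ⟪p - p', x - x'⟫ := by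
    rw [hsplit, inner_add_right, real_inner_smul_right, real_inner_self_eq_norm_sq]
    nlinarith [hT _ _ _ _ hv hv']
  nlinarith [real_inner_le_norm (p - p') (x - x'), norm_nonneg (p - p'), norm_nonneg (x - x')]

namespace IsResolventFamilyOf

theorem norm_sub_le (hJ : IsResolventFamilyOf J T) (hT : IsMonotoneOp T) {c : ℝ} (hc : 0 < c)
    (x y : H) : ‖J c x - J c y‖ ≤ ‖x - y‖ :=
  hT.norm_sub_le_of_sub_mem_smul hc (hJ c hc x) (hJ c hc y)

theorem apply_eq_of_sub_mem_smul (hJ : IsResolventFamilyOf J T) (hT : IsMonotoneOp T) {c : ℝ}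
    (hc : 0 < c) {x y : H} (hy : x - y ∈ c • T y) : J c x = y := by
  simpa [sub_eq_zero] using hT.norm_sub_le_of_sub_mem_smul hc (hJ c hc x) hy

theorem apply_eq_self_of_zero_mem (hJ : IsResolventFamilyOf J T) (hT : IsMonotoneOp T) {c : ℝ}
    (hc : 0 < c) {s : H} (hs : 0 ∈ T s) : J c s = s :=
  hJ.apply_eq_of_sub_mem_smul hT hc ⟨0, hs, by simp⟩

theorem norm_apply_sub_le_of_zero_mem (hJ : IsResolventFamilyOf J T) (hT : IsMonotoneOp T)
    {c : ℝ} (hc : 0 < c) {s : H} (hs : 0 ∈ T s) (x : H) : ‖J c x - s‖ ≤ ‖x - s‖ := by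
  simpa only [hJ.apply_eq_self_of_zero_mem hT hc hs] using hJ.norm_sub_le hT hc x s

/-- Via the resolvent identity `J c x = J c' (J c x + (c' / c) • (x - J c x))`. -/
theorem norm_apply_sub_apply_le (hJ : IsResolventFamilyOf J T) (hT : IsMonotoneOp T) {c c' : ℝ}
    (hc : 0 < c) (hc' : 0 < c') (x x' : H) :
    ‖J c' x' - J c x‖ ≤ ‖x' - x‖ + |c' - c| / c * ‖x - J c x‖ := by
  set y := J c x
  set x'' := y + (c' / c) • (x - y)
  have hx'' : J c' x'' = y := by
    obtain ⟨v, hv, hcv⟩ := hJ c hc x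
    refine hJ.apply_eq_of_sub_mem_smul hT hc' ⟨v, hv, ?_⟩
    simp only [x'', add_sub_cancel_left]
    rw [← show c • v = x - y from hcv, smul_smul, div_mul_cancel₀ _ hc.ne']
  have hxx'' : x - x'' = ((c - c') / c) • (x - y) := by
    simp only [x'', sub_div, div_self hc.ne', sub_smul, one_smul]; abel
  calc ‖J c' x' - y‖ = ‖J c' x' - J c' x''‖ := by rw [hx'']
    _ ≤ ‖x' - x''‖ := hJ.norm_sub_le hT hc' x' x''
    _ ≤ ‖x' - x‖ + ‖x - x''‖ := norm_sub_le_norm_sub_add_norm_sub _ _ _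
    _ = ‖x' - x‖ + |c' - c| / c * ‖x - y‖ := by
      rw [hxx'', norm_smul, Real.norm_eq_abs, abs_div, abs_of_pos hc, abs_sub_comm]

end IsResolventFamilyOf

end Resolvent

section Sums

variable {f : ℕ → ℝ} {m : ℕ} {B : ℝ}

theorem le_of_forall_sum_Icc_le (hf : ∀ i, 0 ≤ f i)
    (hB : ∀ n, ∑ i ∈ Icc (m + 1) (m + n), f i ≤ B) {i : ℕ} (hi : m < i) : f i ≤ B :=
  (single_le_sum (fun j _ => hf j) (by simp only [mem_Icc]; omega)).trans (hB (i - m))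

theorem sum_range_le_of_forall_sum_Icc_le (hf : ∀ i, 0 ≤ f i)
    (hB : ∀ n, ∑ i ∈ Icc (m + 1) (m + n), f i ≤ B) (n : ℕ) :
    ∑ i ∈ range n, f i ≤ ∑ i ∈ range (m + 1), f i + B :=
  calc ∑ i ∈ range n, f i ≤ ∑ i ∈ range (m + 1 + n), f i :=
        sum_le_sum_of_subset_of_nonneg (range_subset_range.mpr (by omega)) fun i _ _ => hf i
    _ = ∑ i ∈ range (m + 1), f i + ∑ i ∈ Icc (m + 1) (m + n), f i := by
        rw [← sum_range_add_sum_Ico f (m := m + 1) (by omega), show m + 1 + n = m + n + 1 by omega,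
          Ico_add_one_right_eq_Icc]
    _ ≤ ∑ i ∈ range (m + 1), f i + B := by grw [hB n]

theorem le_add_sum_range_of_le_max_add {r ε : ℕ → ℝ} {M : ℝ} (h0 : r 0 ≤ M)
    (hε : ∀ n, 0 ≤ ε n) (hr : ∀ n, r (n + 1) ≤ max M (r n) + ε n) (n : ℕ) :
    r n ≤ M + ∑ i ∈ range n, ε i := by
  induction n with
  | zero => simpa using h0
  | succ n ih =>
    have hmax : max M (r n) ≤ M + ∑ i ∈ range n, ε i :=
      max_le (le_add_of_nonneg_right (sum_nonneg fun i _ => hε i)) ih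
    rw [sum_range_succ]
    linarith [hr n]

end Sums

section Convex

variable {E : Type*} [NormedAddCommGroup E] [NormedSpace ℝ E]

theorem norm_sub_le_max_add_of_eq_smul_add_smul_add_smul {l g d : ℝ} (hl : 0 ≤ l) (hg : 0 ≤ g)
    (hd : 0 ≤ d) (hsum : l + g + d = 1) {u x y e x' s : E}
    (hx' : x' = l • u + g • x + d • y + e) (hy : ‖y - s‖ ≤ ‖x - s‖) :
    ‖x' - s‖ ≤ max ‖u - s‖ ‖x - s‖ + ‖e‖ := by
  have hdecomp : x' - s = (l • (u - s) + g • (x - s) + d • (y - s)) + e := by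
    rw [hx', show l = 1 - g - d by linarith]; module
  have hconv : ‖l • (u - s) + g • (x - s) + d • (y - s)‖ ≤ max ‖u - s‖ ‖x - s‖ := by
    set M := max ‖u - s‖ ‖x - s‖
    calc _ ≤ l * ‖u - s‖ + g * ‖x - s‖ + d * ‖x - s‖ := by
          grw [norm_add₃_le, norm_smul_of_nonneg hl, norm_smul_of_nonneg hg,
            norm_smul_of_nonneg hd, hy]
      _ ≤ l * M + g * M + d * M := by gcongr <;> simp [M]
      _ = M := by rw [← add_mul, ← add_mul, hsum, one_mul]
  rw [hdecomp]
  grw [norm_add_le, hconv]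

theorem norm_sub_le_of_eq_smul_add_one_sub_smul {x x' w s : E} {γ a R : ℝ} (ha : 0 < a)
    (hγ : 0 ≤ γ) (hγa : 1 / a ≤ 1 - γ) (hx' : x' = γ • x + (1 - γ) • w)
    (hx : ‖x - s‖ ≤ R) (hxR' : ‖x' - s‖ ≤ R) : ‖w - s‖ ≤ 2 * a * R := by
  have hγ1 : γ ≤ 1 := by linarith [one_div_pos.mpr ha]
  have hw : (1 - γ) • (w - s) = (x' - s) - γ • (x - s) := by rw [hx']; module
  have hwR : (1 - γ) * ‖w - s‖ ≤ 2 * R := by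
    rw [← norm_smul_of_nonneg (by linarith), hw]
    grw [norm_sub_le, norm_smul_of_nonneg hγ, hx, hxR']
    nlinarith [(norm_nonneg _).trans hx]
  have haγ : 1 ≤ a * (1 - γ) := by rwa [div_le_iff₀' ha] at hγa
  nlinarith [norm_nonneg (w - s)]

theorem eq_smul_add_smul_add_smul_of_eq {l g d : ℝ} (hg : g ≠ 1) (hsum : l + g + d = 1)
    {u x y e w : E} (h : g • x + (1 - g) • w = l • u + g • x + d • y + e) :
    w = (l / (1 - g)) • u + (1 - l / (1 - g)) • y + (1 - g)⁻¹ • e := by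
  have hg' : 1 - g ≠ 0 := sub_ne_zero.mpr hg.symm
  have hw : (1 - g) • w = l • u + (1 - g - l) • y + e := by
    rw [show 1 - g - l = d by linarith]
    linear_combination (norm := module) h
  rw [← inv_smul_smul₀ hg' w, hw]
  match_scalars <;> field_simp

theorem norm_sub_le_of_eq_smul_add_smul_add {α α' : ℝ} (hα' : 0 ≤ α') (hα'1 : α' ≤ 1)
    (u y y' v v' : E) :
    ‖(α' • u + (1 - α') • y' + v') - (α • u + (1 - α) • y + v)‖ ≤
      |α' - α| * ‖u - y‖ + ‖y' - y‖ + ‖v'‖ + ‖v‖ := by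
  have hdecomp : (α' • u + (1 - α') • y' + v') - (α • u + (1 - α) • y + v) =
      (α' - α) • (u - y) + (1 - α') • (y' - y) + v' - v := by module
  rw [hdecomp]
  grw [norm_sub_le, norm_add₃_le, norm_smul, norm_smul_of_nonneg (by linarith),
    Real.norm_eq_abs]
  nlinarith [norm_nonneg (y' - y)]

end Convex

theorem natCast_div_le_one_div_of_mul_le {M K m : ℕ} (hm : 0 < m) (h : M * m ≤ K + 1) :
    (M : ℝ) / (K + 1) ≤ 1 / m := by
  rw [div_le_div_iff₀ (by positivity) (by positivity)]
  exact_mod_cast (by linarith : M * m ≤ 1 * (K + 1))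

section Iteration

variable {H : Type*} [NormedAddCommGroup H] [InnerProductSpace ℝ H] {T : H → Set H}
  {J : ℝ → H → H} {u s : H} {lam gam del cs : ℕ → ℝ} {e z w : ℕ → H}

theorem mPPA_norm_sub_sub_norm_sub_le (hJ : IsResolventFamilyOf J T) (hT : IsMonotoneOp T)
    (hlam : ∀ n, 0 ≤ lam n) (hgam : ∀ n, gam n < 1) (hdel : ∀ n, 0 ≤ del n)
    (hsum : ∀ n, lam n + gam n + del n = 1) (hcs : ∀ n, 0 < cs n)
    (hz : ∀ n, z (n + 1) = lam n • u + gam n • z n + del n • J (cs n) (z n) + e n)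
    (hw : ∀ n, z (n + 1) = gam n • z n + (1 - gam n) • w n) (n : ℕ) :
    ‖w (n + 1) - w n‖ - ‖z (n + 1) - z n‖ ≤
      |lam (n + 1) / (1 - gam (n + 1)) - lam n / (1 - gam n)| * ‖u - J (cs n) (z n)‖
        + |cs (n + 1) - cs n| / cs n * ‖z n - J (cs n) (z n)‖
        + ‖e (n + 1)‖ / (1 - gam (n + 1)) + ‖e n‖ / (1 - gam n) := by
  have hw_eq (m : ℕ) : w m = (lam m / (1 - gam m)) • u
      + (1 - lam m / (1 - gam m)) • J (cs m) (z m) + (1 - gam m)⁻¹ • e m :=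
    eq_smul_add_smul_add_smul_of_eq (hgam m).ne (hsum m) ((hw m).symm.trans (hz m))
  have hpos : 0 < 1 - gam (n + 1) := sub_pos.mpr (hgam (n + 1))
  have hα : lam (n + 1) / (1 - gam (n + 1)) ≤ 1 := by
    rw [div_le_one hpos]; linarith [hsum (n + 1), hdel (n + 1)]
  have he (m : ℕ) : ‖(1 - gam m)⁻¹ • e m‖ = ‖e m‖ / (1 - gam m) := by
    rw [norm_smul_of_nonneg (inv_nonneg.mpr (sub_pos.mpr (hgam m)).le), inv_mul_eq_div]
  rw [hw_eq (n + 1), hw_eq n]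
  grw [norm_sub_le_of_eq_smul_add_smul_add (div_nonneg (hlam _) hpos.le) hα,
    hJ.norm_apply_sub_apply_le hT (hcs n) (hcs (n + 1)), he, he]
  linarith

theorem mPPA_norm_sub_sub_norm_sub_le_of_nuFun_le (hJ : IsResolventFamilyOf J T)
    (hT : IsMonotoneOp T) (hs : 0 ∈ T s)
    (hlam : ∀ n, 0 ≤ lam n) (hdel : ∀ n, 0 ≤ del n)
    (hsum : ∀ n, lam n + gam n + del n = 1) (hcs : ∀ n, 0 < cs n)
    (hz : ∀ n, z (n + 1) = lam n • u + gam n • z n + del n • J (cs n) (z n) + e n)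
    (hw : ∀ n, z (n + 1) = gam n • z n + (1 - gam n) • w n)
    {a c : ℕ} (ha : 0 < a) (hc : 0 < c) {ℓ Γ E : ℕ → ℕ}
    (Q1 : ∀ k n : ℕ, ℓ k ≤ n → lam n ≤ 1 / ((k:ℝ)+1))
    (Q3 : ∀ m : ℕ, 1 / (a:ℝ) ≤ 1 - gam m)
    (Q4 : ∀ n, 1 / (c:ℝ) ≤ cs n)
    (Q5 : ∀ k n : ℕ, Γ k ≤ n → |cs (n+1) - cs n| ≤ 1 / ((k:ℝ)+1))
    (Q6 : ∀ k n : ℕ, ∑ i ∈ Icc (E k + 1) (E k + n), ‖e i‖ ≤ 1 / ((k:ℝ)+1))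
    {N₀ N₁ N₃ : ℕ} (hzN₀ : ∀ n, ‖z n - s‖ ≤ N₀) (hN₃ : ‖u - s‖ ≤ N₃) (k n : ℕ)
    (hn : nuFun ℓ Γ E a c N₀ N₁ N₃ k ≤ n) :
    ‖w (n + 1) - w n‖ - ‖z (n + 1) - z n‖ ≤ 1 / ((k:ℝ)+1) := by
  simp only [nuFun, max_le_iff] at hn
  set K₁ := 10 * a * (N₀ + N₁ + N₃) * (k + 1) with hK₁
  set K₂ := 10 * a * c * N₀ * (k + 1) with hK₂
  set K₃ := 5 * a * (k + 1) with hK₃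
  obtain ⟨hnΓ, hnℓ, hnE⟩ := hn
  have hgam (m : ℕ) : gam m < 1 := by
    linarith [Q3 m, one_div_pos.mpr (show (0:ℝ) < a by exact_mod_cast ha)]
  have hdiv (m : ℕ) {x : ℝ} (hx : 0 ≤ x) : x / (1 - gam m) ≤ a * x := by
    calc x / (1 - gam m) ≤ x / (1 / a) := div_le_div_of_nonneg_left hx (by positivity) (Q3 m)
      _ = a * x := by rw [div_div_eq_mul_div, div_one, mul_comm]
  have hJz : ‖J (cs n) (z n) - s‖ ≤ N₀ :=
    (hJ.norm_apply_sub_le_of_zero_mem hT (hcs n) hs (z n)).trans (hzN₀ n)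
  have hα (m : ℕ) (hm : ℓ K₁ ≤ m) :
      0 ≤ lam m / (1 - gam m) ∧ lam m / (1 - gam m) ≤ a / (K₁ + 1) := by
    refine ⟨div_nonneg (hlam m) (sub_pos.mpr (hgam m)).le, (hdiv m (hlam m)).trans ?_⟩
    grw [Q1 K₁ m hm, mul_one_div]
  have he (m : ℕ) (hm : E K₃ + 1 ≤ m) : ‖e m‖ / (1 - gam m) ≤ a / (K₃ + 1) := by
    grw [hdiv m (norm_nonneg _), le_of_forall_sum_Icc_le (fun i => norm_nonneg (e i)) (Q6 K₃) hm,
      mul_one_div]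
  have hK₀ : 0 < 5 * (k + 1) := by positivity
  have hterm₁ : |lam (n + 1) / (1 - gam (n + 1)) - lam n / (1 - gam n)| * ‖u - J (cs n) (z n)‖
      ≤ 1 / (5 * (k + 1) : ℕ) :=
    calc _ ≤ ((a : ℝ) / (K₁ + 1)) * (N₃ + N₀) := by
          gcongr
          · exact abs_sub_le_of_nonneg_of_le (hα _ (by omega)).1 (hα _ (by omega)).2
              (hα _ hnℓ).1 (hα _ hnℓ).2
          · grw [norm_sub_le_norm_sub_add_norm_sub u s, norm_sub_rev s, hN₃, hJz]
      _ = ((a * (N₃ + N₀) : ℕ) : ℝ) / (K₁ + 1) := by push_cast; ring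
      _ ≤ _ := natCast_div_le_one_div_of_mul_le hK₀ (by rw [hK₁]; nlinarith)
  have hterm₂ : |cs (n + 1) - cs n| / cs n * ‖z n - J (cs n) (z n)‖ ≤ 1 / (5 * (k + 1) : ℕ) :=
    calc _ ≤ (1 / ((K₂ : ℝ) + 1)) * c * (N₀ + N₀) := by
          rw [div_eq_mul_one_div _ (cs n)]
          gcongr
          · exact one_div_nonneg.mpr (hcs n).le
          · exact Q5 K₂ n hnΓ
          · exact one_div_le (hcs n) (by positivity) |>.mpr (Q4 n)
          · grw [norm_sub_le_norm_sub_add_norm_sub (z n) s, norm_sub_rev s, hzN₀ n, hJz]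
      _ = ((c * (N₀ + N₀) : ℕ) : ℝ) / (K₂ + 1) := by push_cast; ring
      _ ≤ _ := natCast_div_le_one_div_of_mul_le hK₀ (by rw [hK₂]; nlinarith)
  have hterm₃ (m : ℕ) (hm : E K₃ + 1 ≤ m) : ‖e m‖ / (1 - gam m) ≤ 1 / (5 * (k + 1) : ℕ) :=
    (he m hm).trans (natCast_div_le_one_div_of_mul_le hK₀ (by rw [hK₃]; nlinarith))
  calc _ ≤ _ := mPPA_norm_sub_sub_norm_sub_le hJ hT hlam hgam hdel hsum hcs hz hw n
    _ ≤ 4 * (1 / (5 * (k + 1) : ℕ)) := by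
        linarith [hterm₃ n hnE, hterm₃ (n + 1) (by omega)]
    _ ≤ 1 / ((k : ℝ) + 1) := by
        push_cast
        rw [mul_one_div, div_le_div_iff₀ (by positivity) (by positivity)]
        linarith

end Iteration

theorem mPPA_bounded_and_asymptotic_general
    {H : Type*} [NormedAddCommGroup H] [InnerProductSpace ℝ H]
    (T : H → Set H) (hT : IsMaximalMonotoneOp T)
    (J : ℝ → H → H) (hJ : IsResolventFamilyOf J T)
    (s : H) (hsS : (0:H) ∈ T s)
    (u : H) (lam gam del cs : ℕ → ℝ) (e : ℕ → H) (z w : ℕ → H)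
    (hlam01 : ∀ n, lam n ∈ Set.Ioo (0:ℝ) 1)
    (hgam01 : ∀ n, gam n ∈ Set.Ioo (0:ℝ) 1)
    (hdel01 : ∀ n, del n ∈ Set.Ioo (0:ℝ) 1)
    (hsum1 : ∀ n, lam n + gam n + del n = 1)
    (hcs0 : ∀ n, 0 < cs n)
    (hmPPA : ∀ n, z (n+1) = lam n • u + gam n • z n + del n • J (cs n) (z n) + e n)
    (a c : ℕ) (ha : 0 < a) (hc : 0 < c)
    (ℓ Γ E : ℕ → ℕ)
    (Q1 : ∀ k n : ℕ, ℓ k ≤ n → lam n ≤ 1 / ((k:ℝ)+1))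
    (Q3 : ∀ m : ℕ, 1 / (a:ℝ) ≤ gam m ∧ gam m ≤ 1 - 1 / (a:ℝ))
    (Q4 : ∀ n, 1 / (c:ℝ) ≤ cs n)
    (Q5 : ∀ k n : ℕ, Γ k ≤ n → |cs (n+1) - cs n| ≤ 1 / ((k:ℝ)+1))
    (Q6 : ∀ k n : ℕ, ∑ i ∈ Finset.Icc (E k + 1) (E k + n), ‖e i‖ ≤ 1 / ((k:ℝ)+1))
    (N₁ N₂ N₃ : ℕ)
    (hN₂ : (∑ i ∈ Finset.range (E 0 + 1), ‖e i‖) + 1 ≤ (N₂ : ℝ))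
    (hN₃u : ‖u - s‖ ≤ (N₃ : ℝ)) (hN₃z : ‖z 0 - s‖ ≤ (N₃ : ℝ))
    (hw : ∀ n, z (n+1) = gam n • z n + (1 - gam n) • w n) :
    (∀ n, ‖z n - s‖ ≤ ((N₂ + N₃ : ℕ) : ℝ)) ∧
    (∀ n, ‖w n - s‖ ≤ ((2*a*(N₂+N₃) : ℕ) : ℝ)) ∧
    ∀ k n : ℕ, nuFun ℓ Γ E a c (N₂+N₃) N₁ N₃ k ≤ n →
      ‖w (n+1) - w n‖ - ‖z (n+1) - z n‖ ≤ 1 / ((k:ℝ)+1) := by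
  have hmono := hT.1
  have hQ3 (n : ℕ) : 1 / (a : ℝ) ≤ 1 - gam n := by linarith [(Q3 n).2]
  have hz (n : ℕ) : ‖z n - s‖ ≤ ((N₂ + N₃ : ℕ) : ℝ) := by
    have hstep (m : ℕ) : ‖z (m + 1) - s‖ ≤ max (N₃ : ℝ) ‖z m - s‖ + ‖e m‖ := by
      grw [norm_sub_le_max_add_of_eq_smul_add_smul_add_smul (hlam01 m).1.le (hgam01 m).1.le
        (hdel01 m).1.le (hsum1 m) (hmPPA m)
        (hJ.norm_apply_sub_le_of_zero_mem hmono (hcs0 m) hsS (z m)), hN₃u]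
    have he := sum_range_le_of_forall_sum_Icc_le (fun i => norm_nonneg (e i))
      (by simpa using Q6 0) n
    push_cast
    linarith [le_add_sum_range_of_le_max_add (r := fun m => ‖z m - s‖) hN₃z
      (fun i => norm_nonneg (e i)) hstep n]
  refine ⟨hz, fun n => ?_, mPPA_norm_sub_sub_norm_sub_le_of_nuFun_le hJ hmono hsS
    (fun n => (hlam01 n).1.le) (fun n => (hdel01 n).1.le) hsum1 hcs0 hmPPA hw ha hc
    Q1 hQ3 Q4 Q5 Q6 hz hN₃u⟩
  exact_mod_cast norm_sub_le_of_eq_smul_add_one_sub_smul (by exact_mod_cast ha) (hgam01 n).1.le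
    (hQ3 n) (hw n) (hz n) (hz (n + 1))

/-- Lemma 4.1: boundedness of the iteration and the quantitative
`limsup(‖w_{n+1}-w_n‖ - ‖z_{n+1}-z_n‖) ≤ 0`. -/
theorem mPPA_bounded_and_asymptotic
    {H : Type*} [NormedAddCommGroup H] [InnerProductSpace ℝ H] [CompleteSpace H]
    (T : H → Set H) (hT : IsMaximalMonotoneOp T)
    (J : ℝ → H → H) (hJ : IsResolventFamilyOf J T)
    (s : H) (hsS : (0:H) ∈ T s)
    (u : H) (lam gam del cs : ℕ → ℝ) (e : ℕ → H) (z w : ℕ → H)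
    (hlam01 : ∀ n, lam n ∈ Set.Ioo (0:ℝ) 1)
    (hgam01 : ∀ n, gam n ∈ Set.Ioo (0:ℝ) 1)
    (hdel01 : ∀ n, del n ∈ Set.Ioo (0:ℝ) 1)
    (hsum1 : ∀ n, lam n + gam n + del n = 1)
    (hcs0 : ∀ n, 0 < cs n)
    (hmPPA : ∀ n, z (n+1) = lam n • u + gam n • z n + del n • J (cs n) (z n) + e n)
    (a c : ℕ) (ha : 0 < a) (hc : 0 < c)
    (ℓ Γ E : ℕ → ℕ) (hℓ : Monotone ℓ) (hΓ : Monotone Γ) (hE : Monotone E)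
    (Q1 : ∀ k n : ℕ, ℓ k ≤ n → lam n ≤ 1 / ((k:ℝ)+1))
    (Q3 : ∀ m : ℕ, 1 / (a:ℝ) ≤ gam m ∧ gam m ≤ 1 - 1 / (a:ℝ))
    (Q4 : ∀ n, 1 / (c:ℝ) ≤ cs n)
    (Q5 : ∀ k n : ℕ, Γ k ≤ n → |cs (n+1) - cs n| ≤ 1 / ((k:ℝ)+1))
    (Q6 : ∀ k n : ℕ, ∑ i ∈ Finset.Icc (E k + 1) (E k + n), ‖e i‖ ≤ 1 / ((k:ℝ)+1))
    (N₁ N₂ N₃ : ℕ)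
    (hN₁ : ‖u‖ ≤ (N₁ : ℝ))
    (hN₂ : (∑ i ∈ Finset.range (E 0 + 1), ‖e i‖) + 1 ≤ (N₂ : ℝ))
    (hN₃u : ‖u - s‖ ≤ (N₃ : ℝ)) (hN₃z : ‖z 0 - s‖ ≤ (N₃ : ℝ))
    (hw : ∀ n, z (n+1) = gam n • z n + (1 - gam n) • w n) :
    (∀ n, ‖z n - s‖ ≤ ((N₂ + N₃ : ℕ) : ℝ)) ∧
    (∀ n, ‖w n - s‖ ≤ ((2*a*(N₂+N₃) : ℕ) : ℝ)) ∧
    ∀ k n : ℕ, nuFun ℓ Γ E a c (N₂+N₃) N₁ N₃ k ≤ n →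
      ‖w (n+1) - w n‖ - ‖z (n+1) - z n‖ ≤ 1 / ((k:ℝ)+1) :=
  mPPA_bounded_and_asymptotic_general T hT J hJ s hsS u lam gam del cs e z w hlam01 hgam01 hdel01
    hsum1 hcs0 hmPPA a c ha hc ℓ Γ E Q1 Q3 Q4 Q5 Q6 N₁ N₂ N₃ hN₂ hN₃u hN₃z hw
end

section
/- Let (z_n) and (w_n) be sequences in a normed space X and N ∈ ℕ with ‖z_n‖, ‖w_n‖ ≤ N for all n ∈ ℕ. Let (α_n) ⊂ [0,1] and a ∈ ℕ \ {0} be such that 1/a ≤ α_n ≤ 1 − 1/a for all n ≥ a. Suppose z_{n+1} = α_n w_n + (1 − α_n) z_n for all n ∈ ℕ, and suppose there is a monotone function ν : ℕ → ℕ such that for all k ∈ ℕ and all n ≥ ν(k), ‖w_{n+1} − w_n‖ − ‖z_{n+1} − z_n‖ ≤ 1/(k+1). Then for every k ∈ ℕ and every monotone function f : ℕ → ℕ there is n ≤ χ̃(k,f) such that ‖w_m − z_m‖ ≤ 1/(k+1) for all m ∈ [n, n+f(n)]. Here χ̃(k,f) := φ(k,f) with parameters l := a, t := max{2Na(k+1),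 1} and bound 2N, where φ(k,f) := θ(R−1, h(R−1), t, 2N, g), R := t(2t+1)a^t(k+1), g(m) := t + f(m), h(r) := max{a, a, ν(r)}, and θ(k', M, t, N', g) is defined by: P := N'(k'+1), n_i := M + i·t for i ∈ {0,…,P}, r_P := 0, r_i := t + r_{i+1} + g(n_{i+1} + r_{i+1}) for i < P, and θ := M + (P−1)·t + r₀. -/
/-- `suzukiRho t g M P j` equals `r_{P-j}` where `r_P := 0` and
`r_i := t + r_{i+1} + g(n_{i+1} + r_{i+1})` with `n_i := M + i·t`.
In particular `r₀ = suzukiRho t g M P P`. -/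
def suzukiRho (t : ℕ) (g : ℕ → ℕ) (M P : ℕ) : ℕ → ℕ
  | 0 => 0
  | j+1 => t + suzukiRho t g M P j + g (M + (P - j) * t + suzukiRho t g M P j)

/-- `θ(k', M, t, N', g) := M + (P−1)·t + r₀` where `P := N'(k'+1)`. -/
def thetaFun (k M t N : ℕ) (g : ℕ → ℕ) : ℕ :=
  M + (N * (k+1) - 1) * t + suzukiRho t g M (N * (k+1)) (N * (k+1))

/-- `R := t(2t+1)aᵗ(k+1)`. -/
def Rsz (a k t : ℕ) : ℕ := t * (2*t+1) * a^t * (k+1)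

/-- `χ̃(k,f) := θ(R−1, max{a,a,ν(R−1)}, t, 2N, g)` with `t := max{2Na(k+1), 1}`
and `g(m) := t + f(m)`. -/
def chiTilde (a : ℕ) (ν : ℕ → ℕ) (N k : ℕ) (f : ℕ → ℕ) : ℕ :=
  thetaFun (Rsz a k (max (2*N*a*(k+1)) 1) - 1)
    (max a (max a (ν (Rsz a k (max (2*N*a*(k+1)) 1) - 1))))
    (max (2*N*a*(k+1)) 1) (2*N)
    (fun m => max (2*N*a*(k+1)) 1 + f m)

/-!
Write `s n = ‖w n - z n‖` and `d n = ‖w (n+1) - w n‖ - ‖z (n+1) - z n‖`. Since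
`z (n+1) - z n = α n • (w n - z n)`, one has `s (n+1) ≤ s n + d n`, and Suzuki's Ishikawa-type
inequality bounds `(1 + ∑ α j) s (p+t)` over a block `[p, p+t)` by `‖w (p+t) - z p‖ ≤ 2N` plus
`2 aᵗ` times an error made of the positive parts of `d j` and of `s j - s (p+t)`.
Beyond `ν (R-1)` every `d j ≤ 1/R`, so if `s` did not drop by `1/R` over the block, the error
would be `O(t² / R)` while `∑ α j ≥ t/a ≥ 2N(k+1)`, forcing `s (p+t) ≤ 1/(k+1)`. Thus as long as
`s > 1/(k+1)` it drops by `1/R` every `t` steps, which can happen at most `2NR` times since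
`s ≤ 2N`. With `M = max a (ν (R-1))` this gives `s m ≤ 1/(k+1)` for all `m ≥ M + 2NRt`
(a rate of convergence, independent of `f`), and `M + 2NRt ≤ χ̃(k, f)`.
-/

open Finset

theorem le_of_descent {s : ℕ → ℝ} {B δ ε : ℝ} {M t J : ℕ} (hB : ∀ n, s n ≤ B) (hδ : 0 ≤ δ)
    (hε : 0 ≤ ε) (hJ : B ≤ J * ε) (hdrop : ∀ p ≥ M, δ < s (p + t) → s (p + t) + ε ≤ s p) :
    ∀ m ≥ M + J * t, s m ≤ δ := by
  have hchain : ∀ j p, M ≤ p → δ < s (p + j * t) → s (p + j * t) + j * ε ≤ s p := by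
    intro j
    induction j with
    | zero => intro p _ _; simp
    | succ j ih =>
      intro p hp hlt
      rw [show p + (j + 1) * t = p + j * t + t by ring] at hlt ⊢
      have hstep := hdrop (p + j * t) (by omega) hlt
      have := ih p hp (by linarith)
      push_cast
      linarith
  intro m hm
  by_contra! hlt
  obtain ⟨p, rfl⟩ : ∃ p, m = p + J * t := ⟨m - J * t, by omega⟩
  linarith [hchain J p (by omega) hlt, hB p]

section SuzukiIteration

variable {X : Type*} [NormedAddCommGroup X] [NormedSpace ℝ X] {z w : ℕ → X} {α : ℕ → ℝ}

def stepExcess (z w : ℕ → X) (n : ℕ) : ℝ := ‖w (n + 1) - w n‖ - ‖z (n + 1) - z n‖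

def defectSum (z w : ℕ → X) (p e : ℕ) : ℝ :=
  ∑ j ∈ Ico p e, (max (‖w j - z j‖ - ‖w e - z e‖) 0 + max (stepExcess z w j) 0)

lemma norm_succ_sub_eq (hrec : ∀ n, z (n + 1) = α n • w n + (1 - α n) • z n) {n : ℕ}
    (h0 : 0 ≤ α n) : ‖z (n + 1) - z n‖ = α n * ‖w n - z n‖ := by
  have : z (n + 1) - z n = α n • (w n - z n) := by rw [hrec n]; module
  rw [this, norm_smul, Real.norm_of_nonneg h0]

lemma norm_sub_succ_le (hrec : ∀ n, z (n + 1) = α n • w n + (1 - α n) • z n) {p : ℕ}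
    (h0 : 0 ≤ α p) (h1 : α p ≤ 1) (q : ℕ) :
    ‖w q - z (p + 1)‖ ≤ (1 - α p) * ‖w q - z p‖ + α p * ‖w q - w p‖ := by
  have : w q - z (p + 1) = (1 - α p) • (w q - z p) + α p • (w q - w p) := by
    rw [hrec p]; module
  rw [this]
  refine (norm_add_le _ _).trans_eq ?_
  rw [norm_smul, norm_smul, Real.norm_of_nonneg (sub_nonneg.2 h1), Real.norm_of_nonneg h0]

lemma norm_succ_sub_succ_le (hrec : ∀ n, z (n + 1) = α n • w n + (1 - α n) • z n) {n : ℕ}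
    (h0 : 0 ≤ α n) (h1 : α n ≤ 1) :
    ‖w (n + 1) - z (n + 1)‖ ≤ ‖w n - z n‖ + stepExcess z w n := by
  have hstep := norm_sub_succ_le hrec h0 h1 (n + 1)
  have htri := mul_le_mul_of_nonneg_left
    (norm_sub_le_norm_sub_add_norm_sub (w (n + 1)) (w n) (z n)) (sub_nonneg.2 h1)
  rw [stepExcess, norm_succ_sub_eq hrec h0]
  linarith

lemma norm_add_sub_add_le (hrec : ∀ n, z (n + 1) = α n • w n + (1 - α n) • z n) {p : ℕ}
    {ε : ℝ} (hα : ∀ n ≥ p, 0 ≤ α n ∧ α n ≤ 1) (hd : ∀ n ≥ p, stepExcess z w n ≤ ε) (i : ℕ) :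
    ‖w (p + i) - z (p + i)‖ ≤ ‖w p - z p‖ + i * ε := by
  induction i with
  | zero => simp
  | succ i ih =>
    have hα' := hα (p + i) (by omega)
    have := norm_succ_sub_succ_le hrec hα'.1 hα'.2
    have := hd (p + i) (by omega)
    rw [← add_assoc]
    push_cast
    linarith

lemma norm_sub_le_sum_mul_add_defectSum
    (hrec : ∀ n, z (n + 1) = α n • w n + (1 - α n) • z n) {p e : ℕ} (hpe : p ≤ e)
    (hα : ∀ n ≥ p, 0 ≤ α n ∧ α n ≤ 1) :
    ‖w e - w p‖ ≤ (∑ j ∈ Ico p e, α j) * ‖w e - z e‖ + defectSum z w p e := by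
  calc ‖w e - w p‖ = dist (w p) (w e) := by rw [dist_comm, dist_eq_norm]
    _ ≤ ∑ j ∈ Ico p e, dist (w j) (w (j + 1)) := dist_le_Ico_sum_dist w hpe
    _ ≤ ∑ j ∈ Ico p e, (α j * ‖w e - z e‖ +
          (max (‖w j - z j‖ - ‖w e - z e‖) 0 + max (stepExcess z w j) 0)) := by
        refine sum_le_sum fun j hj => ?_
        obtain ⟨h0, h1⟩ := hα j (mem_Ico.1 hj).1
        have hw : dist (w j) (w (j + 1)) = α j * ‖w j - z j‖ + stepExcess z w j := by
          rw [dist_comm, dist_eq_norm, stepExcess, norm_succ_sub_eq hrec h0]; ring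
        have hgap : α j * (‖w j - z j‖ - ‖w e - z e‖) ≤ max (‖w j - z j‖ - ‖w e - z e‖) 0 :=
          (mul_le_mul_of_nonneg_left (le_max_left _ 0) h0).trans
            (mul_le_of_le_one_left (le_max_right _ _) h1)
        linarith [le_max_left (stepExcess z w j) 0]
    _ = _ := by rw [sum_add_distrib, sum_mul, defectSum]

/-- Suzuki's generalisation of the Goebel–Kirk–Ishikawa inequality. The induction on `l` needs
constants with `C₀ = 0` and `a (C_l + 1) ≤ C_{l+1}`; `C_l = 2 a^l - 2` works for `a ≥ 2`. -/
theorem one_add_sum_mul_norm_sub_le (hrec : ∀ n, z (n + 1) = α n • w n + (1 - α n) • z n)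
    {a : ℝ} (ha : 2 ≤ a) (l : ℕ) :
    ∀ p, (∀ n ≥ p, 0 ≤ α n ∧ α n ≤ 1 - 1 / a) →
      (1 + ∑ j ∈ Ico p (p + l), α j) * ‖w (p + l) - z (p + l)‖ ≤
        ‖w (p + l) - z p‖ + (2 * a ^ l - 2) * defectSum z w p (p + l) := by
  induction l with
  | zero => intro p _; simp [defectSum]
  | succ l ih =>
    intro p hα
    set e := p + (l + 1)
    have ha0 : 0 < 1 / a := by positivity
    have hα01 : ∀ n ≥ p, 0 ≤ α n ∧ α n ≤ 1 :=
      fun n hn => ⟨(hα n hn).1, by linarith [(hα n hn).2]⟩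
    obtain ⟨hαp0, hαp1⟩ := hα p le_rfl
    have hIH : (1 + ∑ j ∈ Ico (p + 1) e, α j) * ‖w e - z e‖ ≤
        ‖w e - z (p + 1)‖ + (2 * a ^ l - 2) * defectSum z w (p + 1) e := by
      have := ih (p + 1) fun n hn => hα n (by omega)
      rwa [show p + 1 + l = e by omega] at this
    have hsplit : ∑ j ∈ Ico p e, α j = α p + ∑ j ∈ Ico (p + 1) e, α j :=
      sum_eq_sum_Ico_succ_bot (by omega) α
    have hstep := norm_sub_succ_le hrec hαp0 (hα01 p le_rfl).2 e
    have hpath := mul_le_mul_of_nonneg_left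
      (norm_sub_le_sum_mul_add_defectSum hrec (show p ≤ e by omega) hα01) hαp0
    have hD0 : 0 ≤ defectSum z w p e := sum_nonneg fun j _ => by positivity
    have hD : defectSum z w (p + 1) e ≤ defectSum z w p e :=
      sum_le_sum_of_subset_of_nonneg (Ico_subset_Ico (Nat.le_succ p) le_rfl)
        fun j _ _ => by positivity
    have hC0 : 0 ≤ 2 * a ^ l - 2 := by nlinarith [one_le_pow₀ (by linarith : (1 : ℝ) ≤ a) (n := l)]
    have hC : 1 + (2 * a ^ l - 2) ≤ (1 - α p) * (2 * a ^ (l + 1) - 2) := by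
      have hC1 : 0 ≤ 2 * a ^ (l + 1) - 2 := by rw [pow_succ]; nlinarith
      have : 1 / a * (2 * a ^ (l + 1) - 2) = 2 * a ^ l - 2 / a := by
        field_simp; ring
      have h2a : 2 / a ≤ 1 := by rw [div_le_one (by linarith)]; exact ha
      nlinarith [mul_le_mul_of_nonneg_right (show 1 / a ≤ 1 - α p by linarith) hC1]
    refine le_of_mul_le_mul_left ?_ (show 0 < 1 - α p by linarith)
    linear_combination hIH + hstep + hpath + mul_le_mul_of_nonneg_left hD hC0 +
      mul_le_mul_of_nonneg_right hC hD0 + mul_le_of_le_one_left hD0 (hα01 p le_rfl).2 +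
      ‖w e - z e‖ * hsplit

lemma defectSum_le (hrec : ∀ n, z (n + 1) = α n • w n + (1 - α n) • z n) {p t : ℕ} {ε : ℝ}
    (hε : 0 ≤ ε) (hα : ∀ n ≥ p, 0 ≤ α n ∧ α n ≤ 1) (hd : ∀ n ≥ p, stepExcess z w n ≤ ε)
    (hdrop : ‖w p - z p‖ < ‖w (p + t) - z (p + t)‖ + ε) :
    defectSum z w p (p + t) ≤ t * (t + 3) / 2 * ε := by
  have hterm : ∀ i ∈ range t, max (‖w (p + i) - z (p + i)‖ - ‖w (p + t) - z (p + t)‖) 0 +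
      max (stepExcess z w (p + i)) 0 ≤ (i + 2) * ε := by
    intro i _
    have := norm_add_sub_add_le hrec hα hd i
    have hgap : max (‖w (p + i) - z (p + i)‖ - ‖w (p + t) - z (p + t)‖) 0 ≤ (i + 1) * ε :=
      max_le (by linarith) (by positivity)
    linarith [max_le (hd (p + i) (by omega)) hε]
  have hgauss : ∀ n : ℕ, ∑ i ∈ range n, ((i : ℝ) + 2) = n * (n + 3) / 2 := by
    intro n
    induction n with
    | zero => simp
    | succ n ih => rw [sum_range_succ, ih]; push_cast; ring
  calc defectSum z w p (p + t) ≤ ∑ i ∈ range t, ((i : ℝ) + 2) * ε := by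
        rw [defectSum, sum_Ico_eq_sum_range, Nat.add_sub_cancel_left]
        exact sum_le_sum hterm
    _ = t * (t + 3) / 2 * ε := by rw [← sum_mul, hgauss]

lemma two_mul_pow_mul_le_inv {a t k K : ℕ} (ht : 2 ≤ t)
    (hK : t * (2 * t + 1) * a ^ t * (k + 1) ≤ K + 1) :
    2 * (a : ℝ) ^ t * (t * (t + 3) / 2 * (1 / ((K : ℝ) + 1))) ≤ 1 / ((k : ℝ) + 1) := by
  have hK' : (t : ℝ) * (2 * t + 1) * a ^ t * (k + 1) ≤ K + 1 := by exact_mod_cast hK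
  have ht' : (t : ℝ) + 3 ≤ 2 * t + 1 := by
    have : (2 : ℝ) ≤ t := by exact_mod_cast ht
    linarith
  have hmono : (t : ℝ) * (t + 3) * a ^ t * (k + 1) ≤ t * (2 * t + 1) * a ^ t * (k + 1) := by
    gcongr
  rw [show 2 * (a : ℝ) ^ t * (t * (t + 3) / 2 * (1 / ((K : ℝ) + 1)))
      = t * (t + 3) * a ^ t / (K + 1) by ring, div_le_div_iff₀ (by positivity) (by positivity)]
  linarith

lemma two_mul_mul_le_sum_Ico {N a k t p : ℕ} (ha : 0 < a) (ht : 2 * N * a * (k + 1) ≤ t)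
    (hα : ∀ n ≥ p, 1 / (a : ℝ) ≤ α n) : 2 * (N : ℝ) * (k + 1) ≤ ∑ j ∈ Ico p (p + t), α j := by
  have hsum := card_nsmul_le_sum (Ico p (p + t)) α (1 / (a : ℝ)) fun j hj => hα j (mem_Ico.1 hj).1
  rw [Nat.card_Ico, Nat.add_sub_cancel_left, nsmul_eq_mul] at hsum
  have ht' : 2 * (N : ℝ) * a * (k + 1) ≤ t := by exact_mod_cast ht
  have : 2 * (N : ℝ) * (k + 1) ≤ t * (1 / a) := by
    rw [mul_one_div, le_div_iff₀ (by exact_mod_cast ha)]; linarith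
  linarith

theorem norm_sub_add_le_of_lt {N a k t K M : ℕ} (hzN : ∀ n, ‖z n‖ ≤ (N : ℝ))
    (hwN : ∀ n, ‖w n‖ ≤ (N : ℝ)) (ha : 2 ≤ a)
    (hα : ∀ n ≥ M, 1 / (a : ℝ) ≤ α n ∧ α n ≤ 1 - 1 / (a : ℝ))
    (hrec : ∀ n, z (n + 1) = α n • w n + (1 - α n) • z n)
    (hd : ∀ n ≥ M, stepExcess z w n ≤ 1 / ((K : ℝ) + 1)) (ht : 2 * N * a * (k + 1) ≤ t)
    (hK : t * (2 * t + 1) * a ^ t * (k + 1) ≤ K + 1) {p : ℕ} (hp : M ≤ p)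
    (hlt : 1 / ((k : ℝ) + 1) < ‖w (p + t) - z (p + t)‖) :
    ‖w (p + t) - z (p + t)‖ + 1 / ((K : ℝ) + 1) ≤ ‖w p - z p‖ := by
  by_contra! hdrop
  have ha' : (2 : ℝ) ≤ a := by exact_mod_cast ha
  have hbound : ∀ q r, ‖w q - z r‖ ≤ 2 * N := fun q r => by
    linarith [norm_sub_le_of_le (hwN q) (hzN r)]
  have hk : (0 : ℝ) < 1 / ((k : ℝ) + 1) := by positivity
  have hN : 1 ≤ N := by
    have : (0 : ℝ) < N := by linarith [hbound (p + t) (p + t)]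
    exact_mod_cast this
  have ht2 : 2 ≤ t := by
    have : 2 * 1 * 2 * 1 ≤ 2 * N * a * (k + 1) := by gcongr; omega
    omega
  have hα' : ∀ n ≥ p, 1 / (a : ℝ) ≤ α n ∧ α n ≤ 1 - 1 / (a : ℝ) := fun n hn => hα n (hp.trans hn)
  have hinv : (0 : ℝ) ≤ 1 / a := by positivity
  have hI := one_add_sum_mul_norm_sub_le hrec ha' t p
    fun n hn => ⟨hinv.trans (hα' n hn).1, (hα' n hn).2⟩
  have hD := defectSum_le hrec (by positivity)
    (fun n hn => ⟨hinv.trans (hα' n hn).1, by linarith [(hα' n hn).2]⟩)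
    (fun n hn => hd n (hp.trans hn)) hdrop
  have hC : (2 * (a : ℝ) ^ t - 2) * defectSum z w p (p + t) ≤ 1 / ((k : ℝ) + 1) := by
    have hD0 : 0 ≤ defectSum z w p (p + t) := sum_nonneg fun j _ => by positivity
    have hpow : (1 : ℝ) ≤ (a : ℝ) ^ t := one_le_pow₀ (by linarith)
    calc (2 * (a : ℝ) ^ t - 2) * defectSum z w p (p + t)
        ≤ 2 * (a : ℝ) ^ t * (t * (t + 3) / 2 * (1 / ((K : ℝ) + 1))) := by
          nlinarith [mul_le_mul_of_nonneg_left hD (by positivity : (0 : ℝ) ≤ 2 * (a : ℝ) ^ t)]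
      _ ≤ 1 / ((k : ℝ) + 1) := two_mul_pow_mul_le_inv ht2 hK
  have hS := two_mul_mul_le_sum_Ico (by omega) ht fun n hn => (hα' n hn).1
  have hkey : (1 + 2 * (N : ℝ) * (k + 1)) * ‖w (p + t) - z (p + t)‖ ≤
      2 * N + 1 / ((k : ℝ) + 1) := by
    nlinarith [hbound (p + t) p, norm_nonneg (w (p + t) - z (p + t))]
  have hk1 : ((k : ℝ) + 1) * (1 / ((k : ℝ) + 1)) = 1 := by field_simp
  nlinarith [mul_lt_mul_of_pos_left hlt (by positivity : (0 : ℝ) < 1 + 2 * N * (k + 1))]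

theorem norm_sub_le_of_stepExcess_le {N a k t K M : ℕ} (hzN : ∀ n, ‖z n‖ ≤ (N : ℝ))
    (hwN : ∀ n, ‖w n‖ ≤ (N : ℝ)) (ha : 2 ≤ a)
    (hα : ∀ n ≥ M, 1 / (a : ℝ) ≤ α n ∧ α n ≤ 1 - 1 / (a : ℝ))
    (hrec : ∀ n, z (n + 1) = α n • w n + (1 - α n) • z n)
    (hd : ∀ n ≥ M, stepExcess z w n ≤ 1 / ((K : ℝ) + 1)) (ht : 2 * N * a * (k + 1) ≤ t)
    (hK : t * (2 * t + 1) * a ^ t * (k + 1) ≤ K + 1) :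
    ∀ m ≥ M + 2 * N * (K + 1) * t, ‖w m - z m‖ ≤ 1 / ((k : ℝ) + 1) := by
  refine le_of_descent (s := fun n => ‖w n - z n‖) (B := 2 * N)
    (fun n => by linarith [norm_sub_le_of_le (hwN n) (hzN n)]) (by positivity) (by positivity)
    ?_ fun p hp hlt => norm_sub_add_le_of_lt hzN hwN ha hα hrec hd ht hK hp hlt
  push_cast
  field_simp
  rfl

end SuzukiIteration

theorem le_thetaFun (k M t N : ℕ) (g : ℕ → ℕ) : M + N * (k + 1) * t ≤ thetaFun k M t N g := by
  unfold thetaFun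
  rcases Nat.eq_zero_or_pos (N * (k + 1)) with hP | hP
  · simp [hP]
  · obtain ⟨P, hP⟩ := Nat.exists_eq_succ_of_ne_zero hP.ne'
    rw [hP, suzukiRho, Nat.succ_sub_one, Nat.succ_mul]
    omega

theorem quantitative_suzuki_two_general
    {X : Type*} [NormedAddCommGroup X] [NormedSpace ℝ X]
    (z w : ℕ → X) (N : ℕ)
    (hzN : ∀ n, ‖z n‖ ≤ (N : ℝ)) (hwN : ∀ n, ‖w n‖ ≤ (N : ℝ))
    (α : ℕ → ℝ)
    (a : ℕ) (ha : 0 < a)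
    (haα : ∀ n : ℕ, a ≤ n → 1 / (a:ℝ) ≤ α n ∧ α n ≤ 1 - 1 / (a:ℝ))
    (hrec : ∀ n, z (n+1) = α n • w n + (1 - α n) • z n)
    (ν : ℕ → ℕ)
    (hνprop : ∀ k n : ℕ, ν k ≤ n →
      ‖w (n+1) - w n‖ - ‖z (n+1) - z n‖ ≤ 1 / ((k:ℝ)+1)) :
    ∀ k : ℕ, ∀ f : ℕ → ℕ, Monotone f → ∃ n ≤ chiTilde a ν N k f,
      ∀ m : ℕ, n ≤ m → m ≤ n + f n → ‖w m - z m‖ ≤ 1 / ((k:ℝ)+1) := by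
  intro k f _
  have ha2 : 2 ≤ a := by
    by_contra! h
    obtain rfl : a = 1 := by omega
    obtain ⟨h1, h2⟩ := haα 1 le_rfl
    linarith
  set t := max (2 * N * a * (k + 1)) 1
  set K := Rsz a k t - 1
  set M := max a (max a (ν K))
  refine ⟨M + 2 * N * (K + 1) * t, le_thetaFun _ _ _ _ _, fun m hm _ => ?_⟩
  exact norm_sub_le_of_stepExcess_le hzN hwN ha2
    (fun n hn => haα n ((le_max_left _ _).trans hn)) hrec
    (fun n hn => hνprop K n ((le_max_right _ _).trans ((le_max_right _ _).trans hn)))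
    (le_max_left _ _) le_tsub_add m hm

/-- Lemma 4.7: quantitative version of Suzuki's second lemma. -/
theorem quantitative_suzuki_two
    {X : Type*} [NormedAddCommGroup X] [NormedSpace ℝ X]
    (z w : ℕ → X) (N : ℕ)
    (hzN : ∀ n, ‖z n‖ ≤ (N : ℝ)) (hwN : ∀ n, ‖w n‖ ≤ (N : ℝ))
    (α : ℕ → ℝ) (hα : ∀ n, α n ∈ Set.Icc (0:ℝ) 1)
    (a : ℕ) (ha : 0 < a)
    (haα : ∀ n : ℕ, a ≤ n → 1 / (a:ℝ) ≤ α n ∧ α n ≤ 1 - 1 / (a:ℝ))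
    (hrec : ∀ n, z (n+1) = α n • w n + (1 - α n) • z n)
    (ν : ℕ → ℕ) (hν : Monotone ν)
    (hνprop : ∀ k n : ℕ, ν k ≤ n →
      ‖w (n+1) - w n‖ - ‖z (n+1) - z n‖ ≤ 1 / ((k:ℝ)+1)) :
    ∀ k : ℕ, ∀ f : ℕ → ℕ, Monotone f → ∃ n ≤ chiTilde a ν N k f,
      ∀ m : ℕ, n ≤ m → m ≤ n + f n → ‖w m - z m‖ ≤ 1 / ((k:ℝ)+1) :=
  quantitative_suzuki_two_general z w N hzN hwN α a ha haα hrec ν hνprop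
end
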